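/- arXiv:1911.04979 — 9 statements merged into one kernel-verified Lean document; each statement's English description precedes it below -/
import Mathlib

section
/- Let λ ≥ 0 and let u ∈ C²_loc((0,1/2];ℝ) satisfy lim_{t→0⁺} √t · u'(t) = 0 and the differential inequality u''(t) ≥ u(t)²/(8t²) + λ/2 for all t ∈ (0,1/2]. Then lim_{t→0⁺} u(t) = 0. -/
open Real Filter Set Topology intervalIntegral

/-- `u` is twice continuously differentiable on every compact subinterval
`[a,b] ⊂ (0, 1/2]`. -/
def C2loc (u : ℝ → ℝ) : Prop :=
  ∀ a b : ℝ, 0 < a → b ≤ 1/2 → ContDiffOn ℝ 2 u (Set.Icc a b)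

theorem stmt0 (lam : ℝ) (hlam : 0 ≤ lam) (u : ℝ → ℝ) (hu : C2loc u)
    (hbc : Tendsto (fun t => Real.sqrt t * deriv u t) (𝓝[>] (0:ℝ)) (𝓝 0))
    (hineq : ∀ t ∈ Set.Ioc (0:ℝ) (1/2),
      deriv (deriv u) t ≥ u t ^ 2 / (8 * t ^ 2) + lam / 2) :
    Tendsto u (𝓝[>] (0:ℝ)) (𝓝 0) := by
  set v := deriv u with hv_def
  set w := deriv (deriv u) with hw_def
  have hIoo : IsOpen (Ioo (0:ℝ) (1/2)) := isOpen_Ioo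
  have h2 : ContDiffOn ℝ 2 u (Ioo 0 (1/2)) := by
    intro t ht
    have h := hu (t/2) (1/2) (by linarith [ht.1]) le_rfl
    exact (h.contDiffAt (Icc_mem_nhds (by linarith [ht.1]) ht.2)).contDiffWithinAt
  have h1v : ContDiffOn ℝ 1 v (Ioo 0 (1/2)) := h2.deriv_of_isOpen hIoo (by norm_num)
  have h0w : ContDiffOn ℝ 0 w (Ioo 0 (1/2)) := h1v.deriv_of_isOpen hIoo (by norm_num)
  have hvc : ContinuousOn v (Ioo 0 (1/2)) := h1v.continuousOn
  have hwc : ContinuousOn w (Ioo 0 (1/2)) := h0w.continuousOn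
  have hvd : ∀ t ∈ Ioo (0:ℝ) (1/2), HasDerivAt u (v t) t := fun t ht =>
    ((h2.contDiffAt (hIoo.mem_nhds ht)).differentiableAt (by norm_num)).hasDerivAt
  have hwd : ∀ t ∈ Ioo (0:ℝ) (1/2), HasDerivAt v (w t) t := fun t ht =>
    ((h1v.contDiffAt (hIoo.mem_nhds ht)).differentiableAt (by norm_num)).hasDerivAt
  have hsub : ∀ s t : ℝ, 0 < s → t < 1/2 → s ≤ t → Icc s t ⊆ Ioo (0:ℝ) (1/2) := by
    intro s t hs ht hst x hx
    exact ⟨lt_of_lt_of_le hs hx.1, lt_of_le_of_lt hx.2 ht⟩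
  have key1 : ∀ s t : ℝ, 0 < s → s ≤ t → t < 1/2 →
      ∫ x in s..t, v x = u t - u s := by
    intro s t hs hst ht
    apply intervalIntegral.integral_eq_sub_of_hasDerivAt
    · intro x hx
      rw [uIcc_of_le hst] at hx
      exact hvd x (hsub s t hs ht hst hx)
    · apply ContinuousOn.intervalIntegrable
      rw [uIcc_of_le hst]
      exact hvc.mono (hsub s t hs ht hst)
  have key2 : ∀ s t : ℝ, 0 < s → s ≤ t → t < 1/2 →
      ∫ x in s..t, w x = v t - v s := by
    intro s t hs hst ht
    apply intervalIntegral.integral_eq_sub_of_hasDerivAt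
    · intro x hx
      rw [uIcc_of_le hst] at hx
      exact hwd x (hsub s t hs ht hst hx)
    · apply ContinuousOn.intervalIntegrable
      rw [uIcc_of_le hst]
      exact hwc.mono (hsub s t hs ht hst)
  -- bound on v from the boundary condition
  have hbc' : ∀ ε > (0:ℝ), ∃ δ > (0:ℝ), ∀ x : ℝ, 0 < x → x < δ → |v x| < ε / Real.sqrt x := by
    intro ε hε
    rw [Metric.tendsto_nhdsWithin_nhds] at hbc
    obtain ⟨δ, hδ, h⟩ := hbc ε hε
    refine ⟨δ, hδ, fun x hx hxδ => ?_⟩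
    have hs : 0 < Real.sqrt x := Real.sqrt_pos.2 hx
    have := h (show x ∈ Ioi (0:ℝ) from hx) (by simpa [abs_of_pos hx] using hxδ)
    rw [Real.dist_eq, sub_zero, abs_mul, abs_of_pos hs] at this
    rw [lt_div_iff₀ hs, mul_comm]
    exact this
  -- Cauchy-type estimate
  have hEst : ∀ ε > (0:ℝ), ∃ δ > (0:ℝ), δ < 1/2 ∧
      ∀ s t : ℝ, s ∈ Ioo (0:ℝ) δ → t ∈ Ioo (0:ℝ) δ → |u t - u s| ≤ ε := by
    intro ε hε
    obtain ⟨δ₀, hδ₀, hb⟩ := hbc' (ε/2) (by linarith)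
    refine ⟨min δ₀ (1/2) / 2, by positivity, by
      have := min_le_right δ₀ (1/2); linarith, ?_⟩
    set δ := min δ₀ (1/2) / 2 with hδdef
    have hδδ₀ : δ ≤ δ₀ / 2 := by
      have := min_le_left δ₀ (1/2); simp only [hδdef]; linarith
    have hδhalf : δ < 1/2 := by
      have := min_le_right δ₀ (1/2); simp only [hδdef]; linarith
    have main : ∀ s t : ℝ, s ∈ Ioo (0:ℝ) δ → t ∈ Ioo (0:ℝ) δ → s ≤ t → |u t - u s| ≤ ε := by
      intro s t hs ht hst
      have hs0 : 0 < s := hs.1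
      have ht2 : t < 1/2 := lt_trans ht.2 hδhalf
      rw [← key1 s t hs0 hst ht2]
      have habs : |∫ x in s..t, v x| ≤ ∫ x in s..t, |v x| :=
        intervalIntegral.abs_integral_le_integral_abs hst
      have hcomp : ∫ x in s..t, |v x| ≤ ∫ x in s..t, (ε/2) / Real.sqrt x := by
        apply intervalIntegral.integral_mono_on hst
        · apply ContinuousOn.intervalIntegrable
          rw [uIcc_of_le hst]
          exact (hvc.mono (hsub s t hs0 ht2 hst)).abs
        · apply ContinuousOn.intervalIntegrable
          apply ContinuousOn.div continuousOn_const
            (Real.continuous_sqrt.continuousOn)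
          intro x hx
          rw [uIcc_of_le hst] at hx
          exact (Real.sqrt_pos.2 (lt_of_lt_of_le hs0 hx.1)).ne'
        · intro x hx
          have hx0 : 0 < x := lt_of_lt_of_le hs0 hx.1
          have hxδ : x < δ₀ := by
            have : x ≤ t := hx.2
            have := ht.2
            linarith [hδδ₀, hδ₀]
          exact (hb x hx0 hxδ).le
      have hcalc : ∫ x in s..t, (ε/2) / Real.sqrt x
          = ε/2 * (2 * Real.sqrt t) - ε/2 * (2 * Real.sqrt s) := by
        apply intervalIntegral.integral_eq_sub_of_hasDerivAt
        · intro x hx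
          rw [uIcc_of_le hst] at hx
          have hx0 : (0:ℝ) < x := lt_of_lt_of_le hs0 hx.1
          have hx0' : x ≠ 0 := hx0.ne'
          have hsx : Real.sqrt x ≠ 0 := (Real.sqrt_pos.2 hx0).ne'
          have h := (Real.hasDerivAt_sqrt hx0').const_mul (ε/2 * 2)
          have e : ε / 2 / Real.sqrt x = ε / 2 * 2 * (1 / (2 * Real.sqrt x)) := by field_simp
          have hf : (fun y : ℝ => ε / 2 * (2 * Real.sqrt y)) = fun y => ε / 2 * 2 * Real.sqrt y := by
            ext y; ring
          rw [e, hf]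
          exact h
        · apply ContinuousOn.intervalIntegrable
          apply ContinuousOn.div continuousOn_const
            (Real.continuous_sqrt.continuousOn)
          intro x hx
          rw [uIcc_of_le hst] at hx
          exact (Real.sqrt_pos.2 (lt_of_lt_of_le hs0 hx.1)).ne'
      have hsq : Real.sqrt t ≤ 1 := by
        rw [show (1:ℝ) = Real.sqrt 1 by simp]
        exact Real.sqrt_le_sqrt (by linarith [ht.2])
      have hsqs : 0 ≤ Real.sqrt s := Real.sqrt_nonneg s
      calc |∫ x in s..t, v x| ≤ ∫ x in s..t, (ε/2) / Real.sqrt x := le_trans habs hcomp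
        _ = ε/2 * (2 * Real.sqrt t) - ε/2 * (2 * Real.sqrt s) := hcalc
        _ ≤ ε := by nlinarith
    intro s t hs ht
    rcases le_total s t with h | h
    · exact main s t hs ht h
    · rw [abs_sub_comm]; exact main t s ht hs h
  -- existence of a limit c
  have hcauchy : Cauchy (Filter.map u (𝓝[>] (0:ℝ))) := by
    rw [Metric.cauchy_iff]
    refine ⟨Filter.map_neBot, fun ε hε => ?_⟩
    obtain ⟨δ, hδ, hδhalf, h⟩ := hEst (ε/2) (by linarith)
    refine ⟨u '' Ioo 0 δ, image_mem_map (Ioo_mem_nhdsGT_of_mem ⟨le_rfl, hδ⟩), ?_⟩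
    rintro x ⟨s, hs, rfl⟩ y ⟨t, ht, rfl⟩
    rw [Real.dist_eq]
    calc |u s - u t| ≤ ε/2 := h t s ht hs
      _ < ε := by linarith
  obtain ⟨c, hc⟩ := CompleteSpace.complete hcauchy
  have hc : Tendsto u (𝓝[>] (0:ℝ)) (𝓝 c) := hc
  -- show c = 0
  have hc0 : c = 0 := by
    by_contra hc0
    have hcpos : 0 < c^2 := by positivity
    -- eventually u x ^ 2 ≥ c^2 / 4
    rw [Metric.tendsto_nhdsWithin_nhds] at hc
    obtain ⟨δ₂, hδ₂, h₂⟩ := hc (|c|/2) (by positivity)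
    set t₀ : ℝ := min δ₂ (1/2) / 2 with ht₀def
    have ht₀pos : 0 < t₀ := by positivity
    have ht₀half : t₀ < 1/2 := by
      have := min_le_right δ₂ (1/2); simp only [ht₀def]; linarith
    have ht₀δ : t₀ < δ₂ := by
      have := min_le_left δ₂ (1/2); simp only [ht₀def]; linarith
    have husq : ∀ x : ℝ, 0 < x → x ≤ t₀ → c^2/4 ≤ u x ^ 2 := by
      intro x hx hxt
      have hxd : dist x 0 < δ₂ := by
        rw [Real.dist_eq, sub_zero, abs_of_pos hx]; linarith
      have := h₂ (show x ∈ Ioi (0:ℝ) from hx) hxd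
      rw [Real.dist_eq] at this
      have h1 : |c| - |u x| ≤ |u x - c| := by
        have := abs_sub_abs_le_abs_sub c (u x)
        rw [abs_sub_comm] at this; linarith
      have h2 : |c|/2 ≤ |u x| := by linarith
      have h3 : (|c|/2)^2 ≤ |u x|^2 := by
        apply pow_le_pow_left₀ (by positivity) h2
      rw [sq_abs] at h3
      have : (|c|)^2 = c^2 := sq_abs c
      nlinarith
    -- pointwise lower bound on w
    have hwlb : ∀ x : ℝ, 0 < x → x ≤ t₀ → c^2/32 * (x^2)⁻¹ ≤ w x := by
      intro x hx hxt
      have h := hineq x ⟨hx, by linarith⟩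
      have hu2 := husq x hx hxt
      have hx2 : 0 < x^2 := by positivity
      have hkey : c^2/4 / (8 * x^2) ≤ u x ^2 / (8 * x^2) := by gcongr
      have heq : c^2/32 * (x^2)⁻¹ = c^2/4 / (8 * x^2) := by
        field_simp; ring
      rw [heq]; linarith
    -- set up constants
    have ht₀mem : t₀ ∈ Ioo (0:ℝ) (1/2) := ⟨ht₀pos, ht₀half⟩
    set K : ℝ := v t₀ + c^2/32 * t₀⁻¹ with hKdef
    have hKabs : 0 < 1 + |K| := by positivity
    set a : ℝ := c^2/(32*(1+|K|)) with hadef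
    have hapos : 0 < a := by positivity
    obtain ⟨δ₁, hδ₁, hb1⟩ := hbc' 1 one_pos
    set t : ℝ := min δ₁ (min t₀ (a^2)) / 2 with htdef
    have hmin1 : min δ₁ (min t₀ (a^2)) ≤ δ₁ := min_le_left _ _
    have hmin2 : min δ₁ (min t₀ (a^2)) ≤ t₀ := le_trans (min_le_right _ _) (min_le_left _ _)
    have hmin3 : min δ₁ (min t₀ (a^2)) ≤ a^2 := le_trans (min_le_right _ _) (min_le_right _ _)
    have htpos : 0 < t := by
      have h1 : 0 < min δ₁ (min t₀ (a^2)) :=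
        lt_min hδ₁ (lt_min ht₀pos (by positivity))
      simp only [htdef]; linarith
    have htδ₁ : t < δ₁ := by simp only [htdef]; linarith
    have htt₀ : t < t₀ := by simp only [htdef]; linarith
    have hta : t < a^2 := by simp only [htdef]; linarith [sq_nonneg a]
    set st : ℝ := Real.sqrt t with hstdef
    have hstpos : 0 < st := Real.sqrt_pos.2 htpos
    have hsta : st < a := by
      have := Real.sqrt_lt_sqrt htpos.le hta
      rwa [Real.sqrt_sq hapos.le] at this
    have hst1 : st ≤ 1 := by
      have h1 : t ≤ 1 := by linarith [ht₀half]
      calc st ≤ Real.sqrt 1 := Real.sqrt_le_sqrt h1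
        _ = 1 := Real.sqrt_one
    have hstt : st * st = t := Real.mul_self_sqrt htpos.le
    -- the integral of x⁻²
    have hInt : ∫ x in t..t₀, (x^2)⁻¹ = -t₀⁻¹ - -t⁻¹ := by
      apply intervalIntegral.integral_eq_sub_of_hasDerivAt (f := fun y : ℝ => -y⁻¹)
      · intro x hx
        rw [uIcc_of_le htt₀.le] at hx
        have hx0 : (0:ℝ) < x := lt_of_lt_of_le htpos hx.1
        simpa using (hasDerivAt_inv hx0.ne').fun_neg
      · apply ContinuousOn.intervalIntegrable
        apply ContinuousOn.inv₀ (by fun_prop)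
        intro x hx
        rw [uIcc_of_le htt₀.le] at hx
        have hx0 : (0:ℝ) < x := lt_of_lt_of_le htpos hx.1
        positivity
    have hIcc : Icc t t₀ ⊆ Ioo (0:ℝ) (1/2) := hsub t t₀ htpos ht₀half htt₀.le
    have hmono : ∫ x in t..t₀, c^2/32 * (x^2)⁻¹ ≤ ∫ x in t..t₀, w x := by
      apply intervalIntegral.integral_mono_on htt₀.le
      · apply ContinuousOn.intervalIntegrable
        apply ContinuousOn.mul continuousOn_const
        apply ContinuousOn.inv₀ (by fun_prop)
        intro x hx
        rw [uIcc_of_le htt₀.le] at hx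
        have hx0 : (0:ℝ) < x := lt_of_lt_of_le htpos hx.1
        positivity
      · apply ContinuousOn.intervalIntegrable
        rw [uIcc_of_le htt₀.le]
        exact hwc.mono hIcc
      · intro x hx
        exact hwlb x (lt_of_lt_of_le htpos hx.1) hx.2
    have hlhs : ∫ x in t..t₀, c^2/32 * (x^2)⁻¹ = c^2/32 * (t⁻¹ - t₀⁻¹) := by
      rw [intervalIntegral.integral_const_mul, hInt]; ring
    have hrhs : ∫ x in t..t₀, w x = v t₀ - v t := key2 t t₀ htpos htt₀.le ht₀half
    have hvt : v t ≤ K - c^2/32 * t⁻¹ := by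
      rw [hlhs, hrhs] at hmono
      simp only [hKdef]
      linarith
    -- multiply by √t and derive contradiction
    have hB := hb1 t htpos htδ₁
    have hB' : -(1 / st) < v t := by
      have := neg_abs_le (v t)
      have h1 : -(1 / st) ≤ -|v t| := by
        rw [neg_le_neg_iff]
        exact le_of_lt (by simpa [hstdef] using hB)
      linarith [neg_abs_le (v t)]
    have hmul : st * v t ≤ st * (K - c^2/32 * t⁻¹) :=
      mul_le_mul_of_nonneg_left hvt hstpos.le
    have hinv : st * t⁻¹ = st⁻¹ := by
      rw [← hstt]
      field_simp
    have hstK : st * K ≤ |K| := by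
      calc st * K ≤ st * |K| := mul_le_mul_of_nonneg_left (le_abs_self K) hstpos.le
        _ ≤ 1 * |K| := mul_le_mul_of_nonneg_right hst1 (abs_nonneg K)
        _ = |K| := one_mul _
    have hInvBound : 1 + |K| ≤ c^2/32 * st⁻¹ := by
      have h1 : a⁻¹ ≤ st⁻¹ := by
        apply inv_anti₀ hstpos hsta.le
      have h2 : c^2/32 * a⁻¹ ≤ c^2/32 * st⁻¹ :=
        mul_le_mul_of_nonneg_left h1 (by positivity)
      have h3 : c^2/32 * a⁻¹ = 1 + |K| := by
        rw [hadef]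
        field_simp
      linarith
    have hfinal : st * v t ≤ -1 := by
      have h1 : st * (K - c^2/32 * t⁻¹) = st * K - c^2/32 * (st * t⁻¹) := by ring
      rw [h1, hinv] at hmul
      clear_value st t K a t₀ v w
      linarith [hmul, hstK, hInvBound]
    have hcontra : -(1/st) < v t → -1 < st * v t := by
      intro h
      have := mul_lt_mul_of_pos_left h hstpos
      have he : st * -(1/st) = -1 := by field_simp
      linarith [he ▸ this]
    have := hcontra hB'
    clear_value st t K a t₀ v w
    linarith [this, hfinal]
  rwa [hc0] at hc
end

section
/- Let λ ≥ 0 and let u ∈ C²_loc((0,1/2];ℝ) satisfy lim_{t→0⁺} u(t) = 0, u(1/2) = u'(1/2), and the differential inequality u''(t) ≥ u(t)²/(8t²) + λ/2 for all t ∈ (0,1/2]. Then u(t) ≤ 0 for all t ∈ (0,1/2]. -/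
open Real Filter Set Topology intervalIntegral

theorem stmt2 (lam : ℝ) (hlam : 0 ≤ lam) (u : ℝ → ℝ) (hu : C2loc u)
    (h0 : Tendsto u (𝓝[>] (0:ℝ)) (𝓝 0))
    (hbc : u (1/2) = deriv u (1/2))
    (hineq : ∀ t ∈ Set.Ioc (0:ℝ) (1/2),
      deriv (deriv u) t ≥ u t ^ 2 / (8 * t ^ 2) + lam / 2) :
    ∀ t ∈ Set.Ioc (0:ℝ) (1/2), u t ≤ 0 := by
  -- Step 1: convexity of `u` on every `[a, 1/2]` with `0 < a < 1/2`.
  have key : ∀ a : ℝ, 0 < a → a < 1/2 → ConvexOn ℝ (Set.Icc a (1/2)) u := by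
    intro a ha ha2
    have h2 : ContDiffOn ℝ 2 u (Set.Ioo (a/2) (1/2)) :=
      (hu (a/2) (1/2) (by linarith) le_rfl).mono Set.Ioo_subset_Icc_self
    have hsub : Set.Ioo a (1/2) ⊆ Set.Ioo (a/2) (1/2) :=
      Set.Ioo_subset_Ioo (by linarith) le_rfl
    refine convexOn_of_deriv2_nonneg (convex_Icc a (1/2))
      (hu a (1/2) ha le_rfl).continuousOn ?_ ?_ ?_
    · rw [interior_Icc]
      exact (h2.differentiableOn two_ne_zero).mono hsub
    · rw [interior_Icc]
      exact ((h2.deriv_of_isOpen (m := 1) isOpen_Ioo (by norm_num)).differentiableOn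
        one_ne_zero).mono hsub
    · intro x hx
      rw [interior_Icc] at hx
      have hx0 : 0 < x := lt_trans ha hx.1
      have h1 := hineq x ⟨hx0, hx.2.le⟩
      have h8 : (0:ℝ) ≤ u x ^ 2 / (8 * x ^ 2) :=
        div_nonneg (sq_nonneg _) (by positivity)
      show (0:ℝ) ≤ deriv (deriv u) x
      linarith
  set c := u (1/2) with hc
  -- Step 2: `u (1/2) ≤ 0`.
  have hcle : c ≤ 0 := by
    by_contra hcpos
    push_neg at hcpos
    have hdiff : DifferentiableAt ℝ u (1/2) := by
      by_contra h
      rw [deriv_zero_of_not_differentiableAt h] at hbc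
      linarith
    -- find a point `t` near 0 with `u t < c/2`
    have hmem : u ⁻¹' (Set.Iio (c/2)) ∩ Set.Ioo (0:ℝ) (1/2) ∈ 𝓝[>] (0:ℝ) :=
      Filter.inter_mem (h0 (Iio_mem_nhds (half_pos hcpos)))
        (Ioo_mem_nhdsGT_of_mem ⟨le_refl 0, by norm_num⟩)
    obtain ⟨t, htu, ht0, ht2⟩ := Filter.nonempty_of_mem hmem
    -- slope inequality
    have hconv := key t ht0 ht2
    have hslope := hconv.slope_le_deriv
      (Set.left_mem_Icc.mpr (by linarith)) (Set.right_mem_Icc.mpr (by linarith))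
      ht2 hdiff
    rw [slope_def_field] at hslope
    rw [← hbc, ← hc] at hslope
    have hden : (0:ℝ) < 1/2 - t := by linarith
    have h1 : c - u t ≤ c * (1/2 - t) := by
      have := (div_le_iff₀ hden).mp hslope
      linarith
    have hut : u t < c/2 := htu
    nlinarith
  -- Step 3: conclude for all `t ∈ (0, 1/2]`.
  intro t ⟨ht0, ht2⟩
  rcases eq_or_lt_of_le ht2 with heq | hlt
  · rw [heq]; exact hcle
  · refine le_of_forall_pos_le_add ?_
    intro ε hε
    -- find `s ∈ (0, t)` with `u s < ε`
    have hmem : u ⁻¹' (Set.Iio ε) ∩ Set.Ioo (0:ℝ) t ∈ 𝓝[>] (0:ℝ) :=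
      Filter.inter_mem (h0 (Iio_mem_nhds hε))
        (Ioo_mem_nhdsGT_of_mem ⟨le_refl 0, ht0⟩)
    obtain ⟨s, hsu, hs0, hst⟩ := Filter.nonempty_of_mem hmem
    have hs2 : s < 1/2 := lt_trans hst hlt
    have hconv := key s hs0 hs2
    have hden : (0:ℝ) < 1/2 - s := by linarith
    set A : ℝ := (1/2 - t) / (1/2 - s) with hA
    set B : ℝ := (t - s) / (1/2 - s) with hB
    have hA0 : 0 ≤ A := div_nonneg (by linarith) hden.le
    have hB0 : 0 ≤ B := div_nonneg (by linarith) hden.le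
    have hAB : A + B = 1 := by
      rw [hA, hB, ← add_div, div_eq_one_iff_eq (by linarith : (1:ℝ)/2 - s ≠ 0)]
      ring
    have hA1 : A ≤ 1 := by linarith
    have hcomb : A • s + B • (1/2 : ℝ) = t := by
      rw [smul_eq_mul, smul_eq_mul, hA, hB, div_mul_eq_mul_div, div_mul_eq_mul_div,
        ← add_div, div_eq_iff (by linarith : (1:ℝ)/2 - s ≠ 0)]
      ring
    have h := hconv.2 (Set.left_mem_Icc.mpr (by linarith))
      (Set.right_mem_Icc.mpr (by linarith)) hA0 hB0 hAB
    rw [hcomb] at h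
    simp only [smul_eq_mul] at h
    have hus : u s < ε := hsu
    have hBc : B * c ≤ 0 := mul_nonpos_of_nonneg_of_nonpos hB0 hcle
    -- `A * u s ≤ ε`
    have hAu : A * u s ≤ ε := by
      rcases le_or_gt (u s) 0 with h' | h'
      · have : A * u s ≤ 0 := mul_nonpos_of_nonneg_of_nonpos hA0 h'
        linarith
      · nlinarith
    rw [← hc] at h
    linarith
end

section
/- Let λ ≥ 0 and let u ∈ C²_loc((0,1/2];ℝ) satisfy lim_{t→0⁺} u(t) = 0, u'(1/2) = 0, and the differential inequality u''(t) ≥ u(t)²/(8t²) + λ/2 for all t ∈ (0,1/2]. Then u(t) ≤ 0 for all t ∈ (0,1/2]. -/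
open Real Filter Set Topology intervalIntegral

theorem stmt3 (lam : ℝ) (hlam : 0 ≤ lam) (u : ℝ → ℝ) (hu : C2loc u)
    (h0 : Tendsto u (𝓝[>] (0:ℝ)) (𝓝 0))
    (hbc : deriv u (1/2) = 0)
    (hineq : ∀ t ∈ Set.Ioc (0:ℝ) (1/2),
      deriv (deriv u) t ≥ u t ^ 2 / (8 * t ^ 2) + lam / 2) :
    ∀ t ∈ Set.Ioc (0:ℝ) (1/2), u t ≤ 0 := by
  set I : Set ℝ := Set.Ioo (0:ℝ) (1/2) with hI
  -- u is C² at every point of the open interval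
  have hCA : ∀ t ∈ I, ContDiffAt ℝ 2 u t := by
    intro t ht
    have h1 : (0:ℝ) < t/2 := by linarith [ht.1]
    have h2 : (t + 1/2)/2 ≤ 1/2 := by linarith [ht.2]
    refine (hu (t/2) ((t + 1/2)/2) h1 h2).contDiffAt ?_
    exact Icc_mem_nhds (by linarith [ht.1]) (by linarith [ht.2])
  have hC2 : ContDiffOn ℝ 2 u I := fun t ht => (hCA t ht).contDiffWithinAt
  have hIopen : IsOpen I := isOpen_Ioo
  have hdiff : ∀ t ∈ I, DifferentiableAt ℝ u t := fun t ht =>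
    (hCA t ht).differentiableAt (by norm_num)
  have hC1d : ContDiffOn ℝ 1 (deriv u) I :=
    hC2.deriv_of_isOpen hIopen (by norm_num)
  have hdiff2 : ∀ t ∈ I, DifferentiableAt ℝ (deriv u) t := fun t ht =>
    ((hC1d t ht).contDiffAt (hIopen.mem_nhds ht)).differentiableAt (by norm_num)
  -- second derivative is nonnegative on the interval
  have hpos2 : ∀ t ∈ I, 0 ≤ deriv (deriv u) t := by
    intro t ht
    have h := hineq t ⟨ht.1, le_of_lt ht.2⟩
    have h1 : 0 ≤ u t ^ 2 / (8 * t ^ 2) := by positivity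
    linarith
  -- deriv u is monotone on I
  have hmono : MonotoneOn (deriv u) I := by
    refine monotoneOn_of_deriv_nonneg (convex_Ioo _ _) ?_ ?_ ?_
    · exact fun t ht => ((hdiff2 t ht).continuousAt).continuousWithinAt
    · intro t ht
      rw [hIopen.interior_eq] at ht
      exact (hdiff2 t ht).differentiableWithinAt
    · intro t ht
      rw [hIopen.interior_eq] at ht
      exact hpos2 t ht
  -- main claim: u ≤ 0 on the open interval
  have key : ∀ t ∈ I, u t ≤ 0 := by
    intro t₀ ht₀
    by_contra hpos
    push_neg at hpos
    -- find s close to 0 with u s < u t₀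
    have hev : ∀ᶠ s in 𝓝[>] (0:ℝ), u s < u t₀ := h0.eventually (gt_mem_nhds hpos)
    have hIoo : Set.Ioo (0:ℝ) t₀ ∈ 𝓝[>] (0:ℝ) :=
      Ioo_mem_nhdsGT_of_mem ⟨le_refl 0, ht₀.1⟩
    obtain ⟨s, hs1, hs2⟩ := (hev.and (eventually_of_mem hIoo (fun x hx => hx))).exists
    have hst : s < t₀ := hs2.2
    have hsubI : Set.Icc s t₀ ⊆ I := fun x hx =>
      ⟨lt_of_lt_of_le hs2.1 hx.1, lt_of_le_of_lt hx.2 ht₀.2⟩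
    -- MVT on [s, t₀] : derivative equals a positive slope somewhere
    obtain ⟨ξ, hξ, hξeq⟩ := exists_deriv_eq_slope u hst
      (fun x hx => ((hdiff x (hsubI hx)).continuousAt).continuousWithinAt)
      (fun x hx => (hdiff x (hsubI (Ioo_subset_Icc_self hx))).differentiableWithinAt)
    have hξI : ξ ∈ I := hsubI (Ioo_subset_Icc_self hξ)
    set c : ℝ := deriv u ξ with hc
    have hcpos : 0 < c := by
      rw [hξeq]
      apply div_pos (by linarith [hs1]) (by linarith)
    -- deriv u ≥ c on [ξ, 1/2)
    have hge : ∀ r ∈ I, ξ ≤ r → c ≤ deriv u r := fun r hr hξr => hmono hξI hr hξr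
    -- u is monotone on [t₀, 1/2]
    have hmu : MonotoneOn u (Set.Icc t₀ (1/2)) := by
      refine monotoneOn_of_deriv_nonneg (convex_Icc _ _) ?_ ?_ ?_
      · exact (hu t₀ (1/2) ht₀.1 le_rfl).continuousOn
      · intro x hx
        rw [interior_Icc] at hx
        exact (hdiff x ⟨lt_trans ht₀.1 hx.1, hx.2⟩).differentiableWithinAt
      · intro x hx
        rw [interior_Icc] at hx
        have hxI : x ∈ I := ⟨lt_trans ht₀.1 hx.1, hx.2⟩
        exact le_trans hcpos.le (hge x hxI (le_trans hξ.2.le hx.1.le))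
    have hu12 : 0 < u (1/2) :=
      lt_of_lt_of_le hpos (hmu ⟨le_rfl, ht₀.2.le⟩ ⟨ht₀.2.le, le_rfl⟩ ht₀.2.le)
    -- hineq at 1/2 forces deriv u to be differentiable at 1/2
    have h12 := hineq (1/2) ⟨by norm_num, le_rfl⟩
    have hpos12 : 0 < deriv (deriv u) (1/2) := by
      have h1 : 0 < u (1/2) ^ 2 / (8 * (1/2:ℝ) ^ 2) := by positivity
      linarith
    have hdiffat : DifferentiableAt ℝ (deriv u) (1/2) := by
      by_contra hnd
      rw [deriv_zero_of_not_differentiableAt hnd] at hpos12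
      exact lt_irrefl 0 hpos12
    -- continuity of deriv u at 1/2 and the lower bound on the left give a contradiction
    have htend : Tendsto (deriv u) (𝓝[<] (1/2:ℝ)) (𝓝 (deriv u (1/2))) :=
      (hdiffat.continuousAt).continuousWithinAt
    have hevc : ∀ᶠ r in 𝓝[<] (1/2:ℝ), c ≤ deriv u r := by
      filter_upwards [Ioo_mem_nhdsLT_of_mem (⟨hξI.2, le_rfl⟩ :
        (1/2:ℝ) ∈ Set.Ioc ξ (1/2))] with r hr
      exact hge r ⟨lt_trans hξI.1 hr.1, hr.2⟩ hr.1.le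
    have : c ≤ deriv u (1/2) := ge_of_tendsto htend hevc
    rw [hbc] at this
    linarith
  -- conclude, handling the endpoint by continuity
  intro t ht
  rcases lt_or_eq_of_le ht.2 with hlt | heq
  · exact key t ⟨ht.1, hlt⟩
  · subst heq
    have hcont : ContinuousWithinAt u (Set.Icc (1/4:ℝ) (1/2)) (1/2) :=
      (hu (1/4) (1/2) (by norm_num) le_rfl).continuousOn (1/2) ⟨by norm_num, le_rfl⟩
    have htu : Tendsto u (𝓝[Set.Ioo (1/4:ℝ) (1/2)] (1/2)) (𝓝 (u (1/2))) :=
      hcont.tendsto.mono_left (nhdsWithin_mono _ Set.Ioo_subset_Icc_self)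
    have hne : (𝓝[Set.Ioo (1/4:ℝ) (1/2)] ((1/2):ℝ)).NeBot :=
      right_nhdsWithin_Ioo_neBot (by norm_num)
    refine le_of_tendsto htu ?_
    filter_upwards [self_mem_nhdsWithin] with x hx
    exact key x ⟨by linarith [hx.1], hx.2⟩
end

section
/- Let λ ≥ 0 and let u ∈ C²_loc((0,1/2];ℝ) satisfy lim_{t→0⁺} u(t) = 0, u(t) ≤ 0 for all t ∈ (0,1/2], and the differential inequality u''(t) ≥ u(t)²/(8t²) + λ/2 for all t ∈ (0,1/2]. Then lim_{t→0⁺} √t · u'(t) = 0 if and only if lim_{t→0⁺} u(t)/√t = 0. -/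
open Real Filter Set Topology intervalIntegral

/-- Scaling lemma: if `u t / √t → 0` then `u (c*t) / √t → 0` for `c > 0`. -/
lemma scale_aux (u : ℝ → ℝ) (c : ℝ) (hc : 0 < c)
    (h : Tendsto (fun t => u t / Real.sqrt t) (𝓝[>] (0:ℝ)) (𝓝 0)) :
    Tendsto (fun t => u (c * t) / Real.sqrt t) (𝓝[>] (0:ℝ)) (𝓝 0) := by
  have hmap : Tendsto (fun t : ℝ => c * t) (𝓝[>] (0:ℝ)) (𝓝[>] (0:ℝ)) := by
    refine tendsto_nhdsWithin_of_tendsto_nhds_of_eventually_within _ ?_ ?_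
    · have : Tendsto (fun t : ℝ => c * t) (𝓝 0) (𝓝 (c * 0)) :=
        (continuous_const.mul continuous_id).tendsto 0
      simpa using this.mono_left nhdsWithin_le_nhds
    · filter_upwards [self_mem_nhdsWithin] with t ht
      exact mul_pos hc ht
  have h2 := (h.comp hmap).const_mul (Real.sqrt c)
  rw [mul_zero] at h2
  refine h2.congr' ?_
  filter_upwards [self_mem_nhdsWithin] with t ht
  have ht' : (0:ℝ) < t := ht
  have hs : Real.sqrt (c * t) = Real.sqrt c * Real.sqrt t := Real.sqrt_mul hc.le t
  have hsc : Real.sqrt c ≠ 0 := (Real.sqrt_pos.mpr hc).ne'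
  simp only [Function.comp]
  rw [hs]
  field_simp

theorem stmt4 (lam : ℝ) (hlam : 0 ≤ lam) (u : ℝ → ℝ) (hu : C2loc u)
    (h0 : Tendsto u (𝓝[>] (0:ℝ)) (𝓝 0))
    (hneg : ∀ t ∈ Set.Ioc (0:ℝ) (1/2), u t ≤ 0)
    (hineq : ∀ t ∈ Set.Ioc (0:ℝ) (1/2),
      deriv (deriv u) t ≥ u t ^ 2 / (8 * t ^ 2) + lam / 2) :
    Tendsto (fun t => Real.sqrt t * deriv u t) (𝓝[>] (0:ℝ)) (𝓝 0) ↔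
      Tendsto (fun t => u t / Real.sqrt t) (𝓝[>] (0:ℝ)) (𝓝 0) := by
  set S : Set ℝ := Set.Ioo (0:ℝ) (1/2) with hS
  have hSopen : IsOpen S := isOpen_Ioo
  -- u is C² at every point of S
  have hC2 : ∀ t ∈ S, ContDiffAt ℝ 2 u t := by
    intro t ht
    have h := hu (t/2) (1/2) (by linarith [ht.1]) le_rfl
    exact h.contDiffAt (Icc_mem_nhds (by linarith [ht.1]) (by linarith [ht.2]))
  have hC2S : ContDiffOn ℝ 2 u S := fun t ht => (hC2 t ht).contDiffWithinAt
  have hd1 : ∀ t ∈ S, DifferentiableAt ℝ u t := fun t ht =>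
    (hC2 t ht).differentiableAt (by norm_num)
  have hderivC1 : ContDiffOn ℝ 1 (deriv u) S :=
    hC2S.deriv_of_isOpen hSopen (by norm_num)
  have hd2 : ∀ t ∈ S, DifferentiableAt ℝ (deriv u) t := by
    intro t ht
    exact ((hderivC1.differentiableOn one_ne_zero) t ht).differentiableAt (hSopen.mem_nhds ht)
  have hcont' : ContinuousOn (deriv u) S := fun t ht =>
    ((hd2 t ht).continuousAt).continuousWithinAt
  have hcontu : ContinuousOn u S := fun t ht => ((hd1 t ht).continuousAt).continuousWithinAt
  -- deriv u is monotone on S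
  have hmono : MonotoneOn (deriv u) S := by
    apply monotoneOn_of_deriv_nonneg (convex_Ioo _ _) hcont'
    · rw [interior_Ioo]
      exact fun t ht => (hd2 t ht).differentiableWithinAt
    · rw [interior_Ioo]
      intro t ht
      have h := hineq t ⟨ht.1, ht.2.le⟩
      have h1 : (0:ℝ) ≤ u t ^ 2 / (8 * t ^ 2) := by positivity
      linarith
  constructor
  · -- √t u' → 0 ⟹ u/√t → 0
    intro h
    rw [NormedAddCommGroup.tendsto_nhds_zero]
    intro ε hε
    have hε3 : (0:ℝ) < ε / 3 := by linarith
    have hev : ∀ᶠ s in 𝓝[>] (0:ℝ), |Real.sqrt s * deriv u s| < ε / 3 ∧ s ∈ S := by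
      have h1 := (NormedAddCommGroup.tendsto_nhds_zero.mp h) (ε/3) hε3
      have h2 : ∀ᶠ s in 𝓝[>] (0:ℝ), s ∈ S := by
        have : S ∈ 𝓝[>] (0:ℝ) := Ioo_mem_nhdsGT_of_mem (by norm_num)
        exact Filter.eventually_mem_set.mpr this
      filter_upwards [h1, h2] with s hs1 hs2
      exact ⟨by rwa [Real.norm_eq_abs] at hs1, hs2⟩
    rw [eventually_iff, mem_nhdsGT_iff_exists_Ioo_subset] at hev
    obtain ⟨δ, hδpos, hδ⟩ := hev
    -- key bound: for t ∈ Ioo 0 δ, |u t| ≤ (2*ε/3) * √t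
    have key : ∀ t ∈ Set.Ioo (0:ℝ) δ, |u t| ≤ (2 * (ε/3)) * Real.sqrt t := by
      intro t ht
      have htS : t ∈ S := (hδ ht).2
      set C : ℝ := 2 * (ε/3) with hC
      -- for each a ∈ (0, t), |u t - u a| ≤ C * √t
      have hstep : ∀ a ∈ Set.Ioo (0:ℝ) t, |u t - u a| ≤ C * Real.sqrt t := by
        intro a ha
        have hat : a ≤ t := ha.2.le
        have hsub : Set.Icc a t ⊆ Set.Ioo 0 δ := fun x hx =>
          ⟨lt_of_lt_of_le ha.1 hx.1, lt_of_le_of_lt hx.2 ht.2⟩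
        have hsubS : Set.Icc a t ⊆ S := fun x hx => (hδ (hsub hx)).2
        -- FTC for u
        have hftc : ∫ s in a..t, deriv u s = u t - u a := by
          apply intervalIntegral.integral_eq_sub_of_hasDerivAt
          · intro x hx
            rw [Set.uIcc_of_le hat] at hx
            exact (hd1 x (hsubS hx)).hasDerivAt
          · apply ContinuousOn.intervalIntegrable
            rw [Set.uIcc_of_le hat]
            exact hcont'.mono hsubS
        -- FTC for C * √s
        have hftc2 : ∫ s in a..t, C * (1 / (2 * Real.sqrt s)) =
            C * Real.sqrt t - C * Real.sqrt a := by
          apply intervalIntegral.integral_eq_sub_of_hasDerivAt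
            (f := fun s => C * Real.sqrt s)
          · intro x hx
            rw [Set.uIcc_of_le hat] at hx
            have hx0 : x ≠ 0 := (lt_of_lt_of_le ha.1 hx.1).ne'
            exact (Real.hasDerivAt_sqrt hx0).const_mul C
          · apply ContinuousOn.intervalIntegrable
            rw [Set.uIcc_of_le hat]
            apply ContinuousOn.mul continuousOn_const
            apply ContinuousOn.div continuousOn_const
            · exact (continuous_const.mul Real.continuous_sqrt).continuousOn
            · intro x hx
              have hx0 : 0 < x := lt_of_lt_of_le ha.1 hx.1
              positivity
        -- pointwise bound
        have hbd : ∀ x ∈ Set.Icc a t, |deriv u x| ≤ C * (1 / (2 * Real.sqrt x)) := by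
          intro x hx
          have hx0 : 0 < x := lt_of_lt_of_le ha.1 hx.1
          have hsx : 0 < Real.sqrt x := Real.sqrt_pos.mpr hx0
          have h1 : |Real.sqrt x * deriv u x| < ε / 3 := (hδ (hsub hx)).1
          rw [abs_mul, abs_of_pos hsx] at h1
          have : |deriv u x| ≤ (ε/3) / Real.sqrt x := by
            rw [le_div_iff₀ hsx]
            nlinarith
          calc |deriv u x| ≤ (ε/3) / Real.sqrt x := this
            _ = C * (1 / (2 * Real.sqrt x)) := by rw [hC]; field_simp
        have hint1 : IntervalIntegrable (fun s => |deriv u s|) MeasureTheory.volume a t := by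
          apply ContinuousOn.intervalIntegrable
          rw [Set.uIcc_of_le hat]
          exact (hcont'.mono hsubS).abs
        have hint2 : IntervalIntegrable (fun s => C * (1 / (2 * Real.sqrt s)))
            MeasureTheory.volume a t := by
          apply ContinuousOn.intervalIntegrable
          rw [Set.uIcc_of_le hat]
          apply ContinuousOn.mul continuousOn_const
          apply ContinuousOn.div continuousOn_const
          · exact (continuous_const.mul Real.continuous_sqrt).continuousOn
          · intro x hx
            have hx0 : 0 < x := lt_of_lt_of_le ha.1 hx.1
            positivity
        have habs : |∫ s in a..t, deriv u s| ≤ ∫ s in a..t, |deriv u s| :=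
          intervalIntegral.abs_integral_le_integral_abs hat
        have hmono' : (∫ s in a..t, |deriv u s|) ≤
            ∫ s in a..t, C * (1 / (2 * Real.sqrt s)) :=
          intervalIntegral.integral_mono_on hat hint1 hint2 hbd
        have hsa : 0 ≤ C * Real.sqrt a := by
          have : (0:ℝ) ≤ C := by rw [hC]; linarith
          positivity
        calc |u t - u a| = |∫ s in a..t, deriv u s| := by rw [hftc]
          _ ≤ ∫ s in a..t, |deriv u s| := habs
          _ ≤ ∫ s in a..t, C * (1 / (2 * Real.sqrt s)) := hmono'
          _ = C * Real.sqrt t - C * Real.sqrt a := hftc2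
          _ ≤ C * Real.sqrt t := by linarith
      -- take a → 0⁺
      have hlim : Tendsto (fun a => |u t - u a|) (𝓝[>] (0:ℝ)) (𝓝 |u t|) := by
        have : Tendsto (fun a => u t - u a) (𝓝[>] (0:ℝ)) (𝓝 (u t - 0)) :=
          tendsto_const_nhds.sub h0
        rw [sub_zero] at this
        exact this.abs
      apply le_of_tendsto hlim
      filter_upwards [Ioo_mem_nhdsGT_of_mem (show (0:ℝ) ∈ Set.Ico 0 t by
        exact ⟨le_rfl, ht.1⟩)] with a ha
      exact hstep a ha
    -- conclude
    have hIoo : Set.Ioo (0:ℝ) δ ∈ 𝓝[>] (0:ℝ) := Ioo_mem_nhdsGT_of_mem ⟨le_rfl, hδpos⟩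
    filter_upwards [hIoo] with t ht
    have ht0 : 0 < t := ht.1
    have hst : 0 < Real.sqrt t := Real.sqrt_pos.mpr ht0
    have := key t ht
    rw [Real.norm_eq_abs, abs_div, abs_of_pos hst, div_lt_iff₀ hst]
    calc |u t| ≤ 2 * (ε/3) * Real.sqrt t := this
      _ < ε * Real.sqrt t := by nlinarith
  · -- u/√t → 0 ⟹ √t u' → 0
    intro h
    -- lower and upper bounds via MVT and monotonicity
    have hlow : Tendsto (fun t => 2 * (u t - u (t/2)) / Real.sqrt t) (𝓝[>] (0:ℝ)) (𝓝 0) := by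
      have h1 : Tendsto (fun t => u ((1/2 : ℝ) * t) / Real.sqrt t) (𝓝[>] (0:ℝ)) (𝓝 0) :=
        scale_aux u (1/2) (by norm_num) h
      have h2 : Tendsto (fun t => 2 * (u t / Real.sqrt t - u ((1/2:ℝ) * t) / Real.sqrt t))
          (𝓝[>] (0:ℝ)) (𝓝 (2 * (0 - 0))) :=
        ((h.sub h1).const_mul 2)
      rw [sub_zero, mul_zero] at h2
      refine h2.congr' ?_
      filter_upwards [self_mem_nhdsWithin] with t ht
      have : (1/2:ℝ) * t = t / 2 := by ring
      rw [this, ← sub_div, mul_div_assoc]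
    have hhigh : Tendsto (fun t => (u (2*t) - u t) / Real.sqrt t) (𝓝[>] (0:ℝ)) (𝓝 0) := by
      have h1 : Tendsto (fun t => u ((2:ℝ) * t) / Real.sqrt t) (𝓝[>] (0:ℝ)) (𝓝 0) :=
        scale_aux u 2 (by norm_num) h
      have h2 := h1.sub h
      rw [sub_zero] at h2
      refine h2.congr' ?_
      filter_upwards [self_mem_nhdsWithin] with t ht
      rw [← sub_div]
    apply tendsto_of_tendsto_of_tendsto_of_le_of_le' hlow hhigh
    · -- lower bound eventually
      filter_upwards [Ioo_mem_nhdsGT_of_mem (show (0:ℝ) ∈ Set.Ico 0 (1/4) by norm_num)]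
        with t ht
      obtain ⟨ht0, ht4⟩ := ht
      have htS : t ∈ S := ⟨ht0, by linarith⟩
      have ht2S : t/2 ∈ S := ⟨by linarith, by linarith⟩
      -- MVT on [t/2, t]
      obtain ⟨c, hc, hceq⟩ := exists_hasDerivAt_eq_slope u (deriv u) (by linarith : t/2 < t)
        (hcontu.mono (fun x hx => ⟨lt_of_lt_of_le (by linarith) hx.1,
          lt_of_le_of_lt hx.2 (by linarith)⟩))
        (fun x hx => (hd1 x ⟨lt_trans (by linarith) hx.1,
          lt_trans hx.2 (by linarith)⟩).hasDerivAt)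
      have hcS : c ∈ S := ⟨lt_trans (by linarith) hc.1, lt_trans hc.2 (by linarith)⟩
      have hmc : deriv u c ≤ deriv u t := hmono hcS htS hc.2.le
      have hst : 0 < Real.sqrt t := Real.sqrt_pos.mpr ht0
      have htt : Real.sqrt t * Real.sqrt t = t := Real.mul_self_sqrt ht0.le
      have hslope : (u t - u (t/2)) / (t - t/2) ≤ deriv u t := by rw [← hceq]; exact hmc
      have h1 : 2 * (u t - u (t/2)) / t ≤ deriv u t := by
        have : t - t/2 = t/2 := by ring
        rw [this, div_le_iff₀ (by linarith : (0:ℝ) < t/2)] at hslope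
        rw [div_le_iff₀ ht0]
        linarith
      have := mul_le_mul_of_nonneg_left h1 hst.le
      calc 2 * (u t - u (t/2)) / Real.sqrt t
          = Real.sqrt t * (2 * (u t - u (t/2)) / t) := by
            have hsq : Real.sqrt t ^ 2 = t := Real.sq_sqrt ht0.le
            field_simp
            linear_combination (u (t/2) - u t) * hsq
        _ ≤ Real.sqrt t * deriv u t := this
    · -- upper bound eventually
      filter_upwards [Ioo_mem_nhdsGT_of_mem (show (0:ℝ) ∈ Set.Ico 0 (1/4) by norm_num)]
        with t ht
      obtain ⟨ht0, ht4⟩ := ht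
      have htS : t ∈ S := ⟨ht0, by linarith⟩
      -- MVT on [t, 2t]
      obtain ⟨c, hc, hceq⟩ := exists_hasDerivAt_eq_slope u (deriv u) (by linarith : t < 2*t)
        (hcontu.mono (fun x hx => ⟨lt_of_lt_of_le ht0 hx.1,
          lt_of_le_of_lt hx.2 (by linarith)⟩))
        (fun x hx => (hd1 x ⟨lt_trans ht0 hx.1, lt_trans hx.2 (by linarith)⟩).hasDerivAt)
      have hcS : c ∈ S := ⟨lt_trans ht0 hc.1, lt_trans hc.2 (by linarith)⟩
      have hmc : deriv u t ≤ deriv u c := hmono htS hcS hc.1.le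
      have hst : 0 < Real.sqrt t := Real.sqrt_pos.mpr ht0
      have htt : Real.sqrt t * Real.sqrt t = t := Real.mul_self_sqrt ht0.le
      have hslope : deriv u t ≤ (u (2*t) - u t) / (2*t - t) := by rw [← hceq]; exact hmc
      have h1 : deriv u t ≤ (u (2*t) - u t) / t := by
        have : 2*t - t = t := by ring
        rwa [this] at hslope
      have := mul_le_mul_of_nonneg_left h1 hst.le
      calc Real.sqrt t * deriv u t
          ≤ Real.sqrt t * ((u (2*t) - u t) / t) := this
        _ = (u (2*t) - u t) / Real.sqrt t := by
            have hsq : Real.sqrt t ^ 2 = t := Real.sq_sqrt ht0.le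
            field_simp
            linear_combination (u (2*t) - u t) * hsq
end

section
/- Let λ ≥ 0 and let u ∈ C²_loc((0,1/2];ℝ) be a solution of Problem 1, i.e. u''(t) = u(t)²/(8t²) + λ/2 for all t ∈ (0,1/2], lim_{t→0⁺} √t · u'(t) = 0, and u(1/2) = 0. Then for all t ∈ (0,1/2], u(t) = -[(1/2 − t)·∫₀^t u(s)²/(4s) ds + t·∫_t^{1/2} (u(s)²/(4s²))·(1/2 − s) ds + (λ/4)·t·(1/2 − t)], and moreover lim_{t→0⁺} |u(t)|/t < +∞. -/
open Real Filter Set Topology intervalIntegral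

open MeasureTheory

section Helpers
private lemma integrableOn_of_bound {g h : ℝ → ℝ} {a b : ℝ}
    (hg : ContinuousOn g (Ioc a b)) (hh : IntegrableOn h (Ioc a b))
    (hb : ∀ s ∈ Ioc a b, |g s| ≤ h s) : IntegrableOn g (Ioc a b) :=
  hh.mono' (hg.aestronglyMeasurable measurableSet_Ioc)
    ((MeasureTheory.ae_restrict_iff' measurableSet_Ioc).2 (Filter.Eventually.of_forall
      (fun s hs => by rw [Real.norm_eq_abs]; exact hb s hs)))

private lemma eq_of_hasDerivAt_zero {f : ℝ → ℝ} {a b : ℝ}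
    (h : ∀ x ∈ Ioo a b, HasDerivAt f 0 x) :
    ∀ x ∈ Ioo a b, ∀ y ∈ Ioo a b, x ≤ y → f x = f y := by
  intro x hx y hy hxy
  have hsub : Icc x y ⊆ Ioo a b := fun z hz => ⟨lt_of_lt_of_le hx.1 hz.1, lt_of_le_of_lt hz.2 hy.2⟩
  have := constant_of_has_deriv_right_zero (f := f) (a := x) (b := y)
    (fun z hz => (h z (hsub hz)).continuousAt.continuousWithinAt)
    (fun z hz => (h z (hsub ⟨hz.1, le_of_lt hz.2⟩)).hasDerivWithinAt)
  exact (this y (right_mem_Icc.2 hxy)).symm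

private lemma eq_zero_of_const_of_tendsto {g : ℝ → ℝ} {t : ℝ} (ht : 0 < t)
    (hconst : ∀ r ∈ Ioo (0:ℝ) t, g r = g t)
    (hlim : Tendsto g (𝓝[>] (0:ℝ)) (𝓝 0)) : g t = 0 := by
  have h1 : Tendsto g (𝓝[>] (0:ℝ)) (𝓝 (g t)) := by
    refine Tendsto.congr' ?_ tendsto_const_nhds
    filter_upwards [Ioo_mem_nhdsGT_of_mem (by constructor <;> simp [ht, le_refl] : (0:ℝ) ∈ Ico (0:ℝ) t)] with r hr
    exact (hconst r hr).symm
  exact tendsto_nhds_unique h1 hlim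

private lemma log_inv_le {x : ℝ} (hx : 0 < x) : Real.log (1/x) ≤ 4 * x ^ (-(1/4) : ℝ) := by
  have h1 : Real.log (1/x) = 4 * Real.log (x ^ (-(1/4) : ℝ)) := by
    rw [Real.log_rpow hx, Real.log_div one_ne_zero (ne_of_gt hx), Real.log_one]; ring
  have h2 := Real.log_le_sub_one_of_pos (Real.rpow_pos_of_pos hx (-(1/4) : ℝ))
  nlinarith [Real.rpow_pos_of_pos hx (-(1/4) : ℝ)]

-- tendsto of rpow at 0+
private lemma rpow_tendsto {q : ℝ} (hq : 0 < q) :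
    Tendsto (fun t : ℝ => t ^ q) (𝓝[>] (0:ℝ)) (𝓝 0) := by
  have := (Real.continuousAt_rpow_const 0 q (Or.inr hq.le)).tendsto
  rw [Real.zero_rpow (ne_of_gt hq)] at this
  exact this.mono_left nhdsWithin_le_nhds

end Helpers

set_option maxHeartbeats 4000000 in
theorem stmt8 (lam : ℝ) (hlam : 0 ≤ lam) (u : ℝ → ℝ) (hu : C2loc u)
    (heq : ∀ t ∈ Set.Ioc (0:ℝ) (1/2),
      deriv (deriv u) t = u t ^ 2 / (8 * t ^ 2) + lam / 2)
    (hbc0 : Tendsto (fun t => Real.sqrt t * deriv u t) (𝓝[>] (0:ℝ)) (𝓝 0))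
    (hbc1 : u (1/2) = 0) :
    (∀ t ∈ Set.Ioc (0:ℝ) (1/2),
      u t = -((1/2 - t) * (∫ s in (0:ℝ)..t, u s ^ 2 / (4 * s)) +
        t * (∫ s in t..(1/2 : ℝ), u s ^ 2 / (4 * s ^ 2) * (1/2 - s)) +
        lam / 4 * t * (1/2 - t))) ∧
    ∃ L : ℝ, Tendsto (fun t => |u t| / t) (𝓝[>] (0:ℝ)) (𝓝 L) := by
  set f : ℝ → ℝ := fun s => u s ^ 2 / (8 * s ^ 2) + lam / 2 with hf_def
  have hCD : ∀ x ∈ Ioo (0:ℝ) (1/2), ContDiffAt ℝ 2 u x := by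
    intro x hx
    refine (hu (x/2) (1/2) (by linarith [hx.1]) le_rfl).contDiffAt ?_
    exact Icc_mem_nhds (by linarith [hx.1]) hx.2
  have hCDO : ContDiffOn ℝ 2 u (Ioo (0:ℝ) (1/2)) :=
    fun x hx => (hCD x hx).contDiffWithinAt
  have hder1 : ∀ x ∈ Ioo (0:ℝ) (1/2), HasDerivAt u (deriv u x) x :=
    fun x hx => ((hCD x hx).differentiableAt (by norm_num)).hasDerivAt
  have hcu : ContinuousOn u (Ioo (0:ℝ) (1/2)) := hCDO.continuousOn
  have hcu' : ContinuousOn (deriv u) (Ioo (0:ℝ) (1/2)) :=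
    hCDO.continuousOn_deriv_of_isOpen isOpen_Ioo (by norm_num)
  have hder2 : ∀ x ∈ Ioo (0:ℝ) (1/2), HasDerivAt (deriv u) (f x) x := by
    intro x hx
    have h1 : DifferentiableOn ℝ (deriv u) (Ioo (0:ℝ) (1/2)) :=
      (hCDO.deriv_of_isOpen (m := 1) isOpen_Ioo (by norm_num)).differentiableOn (by norm_num)
    have h2 := (h1.differentiableAt (isOpen_Ioo.mem_nhds hx)).hasDerivAt
    rwa [heq x ⟨hx.1, hx.2.le⟩] at h2
  have hf0 : ∀ s : ℝ, 0 ≤ f s := fun s => add_nonneg (by positivity) (by linarith)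
  have hcf : ContinuousOn f (Ioo (0:ℝ) (1/2)) := by
    refine ContinuousOn.add (ContinuousOn.div (hcu.pow 2) (by fun_prop) ?_) continuousOn_const
    intro x hx
    have : x ≠ 0 := ne_of_gt hx.1
    positivity
  -- FTC lemmas
  have ftc_u : ∀ a b : ℝ, 0 < a → a ≤ b → b < 1/2 →
      ∫ s in a..b, deriv u s = u b - u a := by
    intro a b ha hab hb
    have hsub : uIcc a b ⊆ Ioo (0:ℝ) (1/2) := by
      rw [uIcc_of_le hab]; exact fun z hz => ⟨lt_of_lt_of_le ha hz.1, lt_of_le_of_lt hz.2 hb⟩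
    exact integral_eq_sub_of_hasDerivAt (fun x hx => hder1 x (hsub hx))
      ((hcu'.mono hsub).intervalIntegrable)
  have ftc_f : ∀ a b : ℝ, 0 < a → a ≤ b → b < 1/2 →
      ∫ s in a..b, f s = deriv u b - deriv u a := by
    intro a b ha hab hb
    have hsub : uIcc a b ⊆ Ioo (0:ℝ) (1/2) := by
      rw [uIcc_of_le hab]; exact fun z hz => ⟨lt_of_lt_of_le ha hz.1, lt_of_le_of_lt hz.2 hb⟩
    exact integral_eq_sub_of_hasDerivAt (fun x hx => hder2 x (hsub hx))
      ((hcf.mono hsub).intervalIntegrable)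

  -- Step A: epsilon=1 bound on deriv u near 0
  obtain ⟨δ₁, hδ₁pos, hδ₁⟩ : ∃ δ : ℝ, 0 < δ ∧ ∀ t : ℝ, t ∈ Ioi (0:ℝ) → dist t 0 < δ →
      dist (Real.sqrt t * deriv u t) 0 < 1 := by
    have h := (Metric.tendsto_nhdsWithin_nhds).1 hbc0 1 one_pos
    obtain ⟨δ, hδ, h2⟩ := h
    exact ⟨δ, hδ, fun t ht hd => h2 ht hd⟩
  set δ₀ : ℝ := min (δ₁/2) (1/4) with hδ₀_def
  have hδ₀pos : 0 < δ₀ := lt_min (by linarith) (by norm_num)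
  have hδ₀14 : δ₀ ≤ 1/4 := min_le_right _ _
  have hδ₀h : δ₀ < 1/2 := lt_of_le_of_lt hδ₀14 (by norm_num)
  have hQ : ∀ t ∈ Ioc (0:ℝ) δ₀, |deriv u t| ≤ t ^ (-(1/2) : ℝ) := by
    intro t ht
    have ht0 := ht.1
    have hst : 0 < Real.sqrt t := Real.sqrt_pos.2 ht0
    have h1 : dist (Real.sqrt t * deriv u t) 0 < 1 := by
      refine hδ₁ t ht.1 ?_
      rw [Real.dist_eq, sub_zero, abs_of_pos ht0]
      have : δ₀ ≤ δ₁/2 := min_le_left _ _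
      linarith [ht.2]
    rw [Real.dist_eq, sub_zero, abs_mul, abs_of_pos hst] at h1
    rw [Real.rpow_neg ht0.le, ← Real.sqrt_eq_rpow, inv_eq_one_div, le_div_iff₀ hst]
    nlinarith [abs_nonneg (deriv u t)]
  -- general decay estimate
  have hstep : ∀ C r : ℝ, 0 ≤ C → -1 < r → r < 0 →
      (∀ s ∈ Ioc (0:ℝ) δ₀, |deriv u s| ≤ C * s ^ r) →
      ∀ a b : ℝ, 0 < a → a ≤ b → b ≤ δ₀ → |u b - u a| ≤ C / (r+1) * b ^ (r+1) := by
    intro C r hC hr hr0 hbd a b ha hab hb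
    have hbh : b < 1/2 := lt_of_le_of_lt hb hδ₀h
    have hsub : Icc a b ⊆ Ioc (0:ℝ) δ₀ := fun z hz => ⟨lt_of_lt_of_le ha hz.1, le_trans hz.2 hb⟩
    have hsub2 : uIcc a b ⊆ Ioo (0:ℝ) (1/2) := by
      rw [uIcc_of_le hab]
      exact fun z hz => ⟨lt_of_lt_of_le ha hz.1, lt_of_le_of_lt hz.2 hbh⟩
    have hint1 : IntervalIntegrable (deriv u) volume a b := (hcu'.mono hsub2).intervalIntegrable
    have h2 : |∫ s in a..b, deriv u s| ≤ ∫ s in a..b, C * s ^ r := by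
      calc |∫ s in a..b, deriv u s| ≤ ∫ s in a..b, |deriv u s| :=
            intervalIntegral.abs_integral_le_integral_abs hab
        _ ≤ ∫ s in a..b, C * s ^ r := by
            refine integral_mono_on hab hint1.abs ((intervalIntegrable_rpow' hr).const_mul C) ?_
            intro x hx
            exact hbd x (hsub hx)
    rw [ftc_u a b ha hab hbh] at h2
    have h3 : ∫ s in a..b, C * s ^ r = C * ((b ^ (r+1) - a ^ (r+1))/(r+1)) := by
      rw [intervalIntegral.integral_const_mul, integral_rpow (Or.inl hr)]
    rw [h3] at h2
    have ha1 : (0:ℝ) ≤ a ^ (r+1) := Real.rpow_nonneg ha.le _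
    have hr1 : (0:ℝ) < r + 1 := by linarith
    calc |u b - u a| ≤ C * ((b ^ (r+1) - a ^ (r+1))/(r+1)) := h2
      _ ≤ C / (r+1) * b ^ (r+1) := by
          rw [div_mul_eq_mul_div, mul_div_assoc]
          gcongr
          linarith
  have hstep1 : ∀ a b : ℝ, 0 < a → a ≤ b → b ≤ δ₀ → |u b - u a| ≤ 2 * b ^ ((1/2) : ℝ) := by
    intro a b ha hab hb
    have := hstep 1 (-(1/2)) zero_le_one (by norm_num) (by norm_num) (fun s hs => by
      simpa using hQ s hs) a b ha hab hb
    norm_num at this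
    convert this using 2 <;> norm_num
  -- Step C: u tends to 0 at 0+
  have hnc : ∀ c : ℝ, 0 < c → ∀ δ' : ℝ, 0 < δ' → δ' ≤ δ₀ → ∃ s, s ∈ Ioc (0:ℝ) δ' ∧ u s ^ 2 < c := by
    intro c hc δ' hδ' hδ'le
    by_contra hcon
    push_neg at hcon
    have hδ'h : δ' < 1/2 := lt_of_le_of_lt hδ'le hδ₀h
    have key : ∀ t, t ∈ Ioo (0:ℝ) δ' → deriv u t ≤ deriv u δ' - c/8 * (1/t - 1/δ') := by
      intro t ht
      have ht0 := ht.1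
      have hrint : IntervalIntegrable (fun s : ℝ => c/8 * s ^ (-2 : ℝ)) volume t δ' := by
        apply ContinuousOn.intervalIntegrable
        apply ContinuousOn.mul continuousOn_const
        apply ContinuousOn.rpow_const continuousOn_id
        intro x hx
        rw [uIcc_of_le ht.2.le] at hx
        exact Or.inl (ne_of_gt (lt_of_lt_of_le ht0 hx.1))
      have hfint : IntervalIntegrable f volume t δ' := by
        apply (hcf.mono ?_).intervalIntegrable
        rw [uIcc_of_le ht.2.le]
        exact fun z hz => ⟨lt_of_lt_of_le ht0 hz.1, lt_of_le_of_lt hz.2 hδ'h⟩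
      have h1 : ∫ s in t..δ', c/8 * s ^ (-2 : ℝ) ≤ ∫ s in t..δ', f s := by
        refine integral_mono_on ht.2.le hrint hfint ?_
        intro x hx
        have hx0 : 0 < x := lt_of_lt_of_le ht0 hx.1
        have hx2 : x ^ (-2:ℝ) = (x^2)⁻¹ := by
          rw [show (-2:ℝ) = -((2:ℕ):ℝ) by norm_num, Real.rpow_neg hx0.le, Real.rpow_natCast]
        have hcle : c ≤ u x ^ 2 := hcon x ⟨hx0, le_trans hx.2 (le_refl _)⟩
        show c/8 * x ^ (-2:ℝ) ≤ u x ^ 2 / (8 * x ^ 2) + lam / 2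
        have h1 : c/8 * x^(-2:ℝ) = c / (8*x^2) := by rw [hx2]; ring
        rw [h1]
        have h2 : c / (8*x^2) ≤ u x ^2 / (8*x^2) := by gcongr
        linarith
      have h2 : ∫ s in t..δ', c/8 * s ^ (-2:ℝ) = c/8 * (1/t - 1/δ') := by
        rw [intervalIntegral.integral_const_mul, integral_rpow (Or.inr ⟨by norm_num, by
          rw [uIcc_of_le ht.2.le]; exact fun h => absurd h.1 (not_le.2 ht0)⟩)]
        rw [show (-2:ℝ) + 1 = -1 by norm_num, Real.rpow_neg_one, Real.rpow_neg_one]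
        field_simp
        ring
      rw [h2, ftc_f t δ' ht0 ht.2.le hδ'h] at h1
      linarith
    have hE1 : ∀ᶠ t in 𝓝[>] (0:ℝ), |Real.sqrt t * deriv u t| < 1 := by
      have := hbc0 (Metric.ball_mem_nhds (0:ℝ) one_pos)
      filter_upwards [this] with t ht
      simpa only [Set.mem_preimage, Metric.mem_ball, Real.dist_eq, sub_zero] using ht
    set m : ℝ := min (min ((|deriv u δ'| + 1)⁻¹) (8*δ'/c)) (c/24) with hm_def
    have hmpos : 0 < m := by
      apply lt_min (lt_min _ _) <;> positivity
    have hE2 : Ioo (0:ℝ) (min (m^2) δ') ∈ 𝓝[>] (0:ℝ) :=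
      Ioo_mem_nhdsGT_of_mem ⟨le_refl _, by positivity⟩
    obtain ⟨t, ht1, ht2⟩ := (hE1.and (eventually_of_mem hE2 (fun x hx => hx))).exists
    have ht0 : 0 < t := ht2.1
    have htm : t < m^2 := lt_of_lt_of_le ht2.2 (min_le_left _ _)
    have htδ : t < δ' := lt_of_lt_of_le ht2.2 (min_le_right _ _)
    set st : ℝ := Real.sqrt t with hst_def
    have hst0 : 0 < st := Real.sqrt_pos.2 ht0
    have hstsq : st * st = t := Real.mul_self_sqrt ht0.le
    have hstm : st ≤ m := by
      rw [hst_def]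
      calc Real.sqrt t ≤ Real.sqrt (m^2) := Real.sqrt_le_sqrt htm.le
        _ = m := Real.sqrt_sq hmpos.le
    have hkey := key t ⟨ht0, htδ⟩
    have hmul := mul_le_mul_of_nonneg_left hkey hst0.le
    -- st * (1/t) = 1/st
    have hinv : st * (1/t) = 1/st := by
      field_simp
      nlinarith
    have hb1 : st * |deriv u δ'| ≤ 1 := by
      have h1 : st ≤ (|deriv u δ'| + 1)⁻¹ := le_trans hstm (le_trans (min_le_left _ _) (min_le_left _ _))
      have h2 : (0:ℝ) < |deriv u δ'| + 1 := by positivity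
      have h3 := mul_le_mul_of_nonneg_right h1 h2.le
      rw [inv_mul_cancel₀ (ne_of_gt h2)] at h3
      nlinarith [abs_nonneg (deriv u δ')]
    have hb2 : c/8 * (st/δ') ≤ 1 := by
      have h1 : st ≤ 8*δ'/c := le_trans hstm (le_trans (min_le_left _ _) (min_le_right _ _))
      have h2 : c/(8*δ') * st ≤ c/(8*δ') * (8*δ'/c) :=
        mul_le_mul_of_nonneg_left h1 (by positivity)
      have h3 : c/(8*δ') * (8*δ'/c) = 1 := by field_simp
      have h4 : c/8 * (st/δ') = c/(8*δ') * st := by ring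
      rw [h4]
      linarith
    have hb3 : 3 ≤ c/8 * (1/st) := by
      have h1 : st ≤ c/24 := le_trans hstm (min_le_right _ _)
      rw [mul_one_div, le_div_iff₀ hst0]
      linarith
    have hfinal : st * deriv u t ≤ -1 := by
      have hexp : st * (deriv u δ' - c/8*(1/t - 1/δ')) =
          st * deriv u δ' - c/8 * (st * (1/t)) + c/8 * (st/δ') := by ring
      rw [hexp, hinv] at hmul
      have habs : st * deriv u δ' ≤ st * |deriv u δ'| := by
        nlinarith [le_abs_self (deriv u δ'), hst0.le]
      linarith
    have hcontra := abs_lt.1 ht1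
    have : -1 < st * deriv u t := hcontra.1
    linarith
  -- u tends to 0
  have htend0 : Tendsto u (𝓝[>] (0:ℝ)) (𝓝 0) := by
    rw [Metric.tendsto_nhdsWithin_nhds]
    intro ε hε
    refine ⟨min δ₀ (ε^2/16), by positivity, ?_⟩
    intro t ht hdist
    rw [Real.dist_eq, sub_zero, abs_of_pos ht] at hdist
    obtain ⟨s, hs, hsc⟩ := hnc ((ε/2)^2) (by positivity) (min δ₀ (ε^2/16)) (by positivity)
      (min_le_left _ _)
    have hsδ : s ≤ δ₀ := le_trans hs.2 (min_le_left _ _)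
    have htδ : t ≤ δ₀ := le_trans hdist.le (min_le_left _ _)
    have hrb : ∀ b : ℝ, 0 < b → b ≤ min δ₀ (ε^2/16) → 2 * b ^ ((1/2):ℝ) ≤ ε/2 := by
      intro b hb hble
      have h1 : b ^ ((1/2):ℝ) ≤ (ε^2/16) ^ ((1/2):ℝ) :=
        Real.rpow_le_rpow hb.le (le_trans hble (min_le_right _ _)) (by norm_num)
      have h2 : (ε^2/16 : ℝ) ^ ((1/2):ℝ) = ε/4 := by
        rw [← Real.sqrt_eq_rpow, show (ε^2/16 : ℝ) = (ε/4)^2 by ring, Real.sqrt_sq (by positivity)]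
      rw [h2] at h1
      linarith
    have hts : |u t - u s| ≤ ε/2 := by
      rcases le_total t s with h | h
      · have := hstep1 t s ht h hsδ
        have h2 := hrb s hs.1 hs.2
        rw [abs_sub_comm]
        linarith
      · have := hstep1 s t hs.1 h htδ
        have h2 := hrb t ht hdist.le
        linarith
    have hus : |u s| < ε/2 := by
      nlinarith [sq_abs (u s), abs_nonneg (u s)]
    rw [Real.dist_eq, sub_zero]
    calc |u t| ≤ |u t - u s| + |u s| := by
          have := abs_sub_abs_le_abs_sub (u t) (u s)
          have h2 := abs_add_le (u t - u s) (u s)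
          simpa using h2
      _ < ε := by linarith

  -- limit bound transfer
  have hlimb : ∀ M q : ℝ, 0 < q →
      (∀ a b : ℝ, 0 < a → a ≤ b → b ≤ δ₀ → |u b - u a| ≤ M * b ^ q) →
      ∀ t ∈ Ioc (0:ℝ) δ₀, |u t| ≤ M * t ^ q := by
    intro M q hq hbd t ht
    have hev : ∀ᶠ a in 𝓝[>] (0:ℝ), |u t| ≤ |u a| + M * t ^ q := by
      filter_upwards [Ioo_mem_nhdsGT_of_mem (⟨le_refl _, ht.1⟩ : (0:ℝ) ∈ Ico (0:ℝ) t)] with a ha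
      have h1 := hbd a t ha.1 ha.2.le ht.2
      have h2 := abs_sub_abs_le_abs_sub (u t) (u a)
      linarith
    have hT : Tendsto (fun a => |u a| + M * t ^ q) (𝓝[>] (0:ℝ)) (𝓝 (|(0:ℝ)| + M * t ^ q)) :=
      htend0.abs.add tendsto_const_nhds
    have := ge_of_tendsto hT hev
    simpa using this
  have hD2 : ∀ t ∈ Ioc (0:ℝ) δ₀, |u t| ≤ 2 * t ^ ((1/2):ℝ) := hlimb 2 _ (by norm_num) hstep1
  have hu2le : ∀ s ∈ Ioc (0:ℝ) δ₀, u s ^ 2 ≤ 4 * s := by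
    intro s hs
    have h1 := hD2 s hs
    have h2 : (s ^ ((1/2):ℝ))^2 = s := by
      rw [← Real.rpow_natCast (s ^ ((1/2):ℝ)) 2, ← Real.rpow_mul hs.1.le]; norm_num
    nlinarith [sq_abs (u s), Real.rpow_nonneg hs.1.le ((1/2):ℝ), abs_nonneg (u s)]
  have hflog : ∀ s ∈ Ioc (0:ℝ) δ₀, f s ≤ 1/(2*s) + lam/2 := by
    intro s hs
    show u s ^ 2 / (8 * s^2) + lam/2 ≤ 1/(2*s) + lam/2
    have h8 : (0:ℝ) < 8*s^2 := by nlinarith [hs.1]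
    have h1 : u s ^2/(8*s^2) ≤ 4*s/(8*s^2) := by
      rw [div_le_div_iff₀ h8 h8]
      nlinarith [hu2le s hs, mul_le_mul_of_nonneg_right (hu2le s hs) h8.le]
    have h2 : 4*s/(8*s^2) = 1/(2*s) := by
      have hs0 : s ≠ 0 := ne_of_gt hs.1
      field_simp
      ring
    linarith
  obtain ⟨c1, hc1_def⟩ : ∃ c : ℝ, c = |deriv u δ₀| + lam * δ₀/2 + |Real.log δ₀|/2 := ⟨_, rfl⟩
  have hc1nn : 0 ≤ c1 := by
    rw [hc1_def]
    have h1 := abs_nonneg (deriv u δ₀)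
    have h2 := abs_nonneg (Real.log δ₀)
    have h3 := mul_nonneg hlam hδ₀pos.le
    linarith
  have hE : ∀ t ∈ Ioc (0:ℝ) δ₀, |deriv u t| ≤ (c1 + 2) * t ^ (-(1/4) : ℝ) := by
    intro t ht
    have ht0 := ht.1
    have hup : deriv u t ≤ deriv u δ₀ := by
      have h1 := ftc_f t δ₀ ht0 ht.2 hδ₀h
      have h2 : 0 ≤ ∫ s in t..δ₀, f s := intervalIntegral.integral_nonneg ht.2 (fun x _ => hf0 x)
      linarith
    have hmaj : IntervalIntegrable (fun s:ℝ => 1/(2*s) + lam/2) volume t δ₀ := by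
      apply ContinuousOn.intervalIntegrable
      refine ContinuousOn.add (ContinuousOn.div continuousOn_const (by fun_prop) ?_) continuousOn_const
      intro x hx
      rw [uIcc_of_le ht.2] at hx
      have hx0 := lt_of_lt_of_le ht0 hx.1
      positivity
    have hfint : IntervalIntegrable f volume t δ₀ := by
      apply (hcf.mono ?_).intervalIntegrable
      rw [uIcc_of_le ht.2]
      exact fun z hz => ⟨lt_of_lt_of_le ht0 hz.1, lt_of_le_of_lt hz.2 hδ₀h⟩
    have h1 : ∫ s in t..δ₀, f s ≤ ∫ s in t..δ₀, (1/(2*s) + lam/2) :=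
      integral_mono_on ht.2 hfint hmaj
        (fun x hx => hflog x ⟨lt_of_lt_of_le ht0 hx.1, hx.2⟩)
    have h2 : ∫ s in t..δ₀, (1/(2*s) + lam/2 : ℝ)
        = 1/2 * (Real.log δ₀ - Real.log t) + lam/2*(δ₀ - t) := by
      have hhalf : IntervalIntegrable (fun s:ℝ => 1/(2*s)) volume t δ₀ := by
        apply ContinuousOn.intervalIntegrable
        refine ContinuousOn.div continuousOn_const (by fun_prop) ?_
        intro x hx
        rw [uIcc_of_le ht.2] at hx
        have hx0 := lt_of_lt_of_le ht0 hx.1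
        positivity
      rw [intervalIntegral.integral_add hhalf intervalIntegrable_const]
      have e1 : (fun s:ℝ => 1/(2*s)) = fun s:ℝ => (1/2)*(1/s) := by
        funext s; ring
      have e2 : ∫ s in t..δ₀, 1/(2*s) = 1/2 * Real.log (δ₀/t) := by
        rw [e1, intervalIntegral.integral_const_mul,
          integral_one_div (by rw [uIcc_of_le ht.2]; exact fun h => absurd h.1 (not_le.2 ht0))]
      rw [e2, Real.log_div (ne_of_gt hδ₀pos) (ne_of_gt ht0)]
      rw [intervalIntegral.integral_const, smul_eq_mul]
      ring
    rw [ftc_f t δ₀ ht0 ht.2 hδ₀h, h2] at h1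
    have hlogt : -Real.log t ≤ 4 * t ^ (-(1/4):ℝ) := by
      have := log_inv_le ht0
      rwa [Real.log_div one_ne_zero (ne_of_gt ht0), Real.log_one, zero_sub] at this
    have h1le : 1 ≤ t ^ (-(1/4):ℝ) :=
      Real.one_le_rpow_of_pos_of_le_one_of_nonpos ht0 (by linarith [ht.2, hδ₀14]) (by norm_num)
    have hlow : -(c1 + 2 * t ^ (-(1/4):ℝ)) ≤ deriv u t := by
      have ha1 : Real.log δ₀ ≤ |Real.log δ₀| := le_abs_self _
      have ha2 : deriv u δ₀ ≥ -|deriv u δ₀| := neg_abs_le _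
      have ha3 : lam/2*(δ₀ - t) ≤ lam * δ₀/2 := by nlinarith
      rw [hc1_def]
      nlinarith
    have hhigh : deriv u t ≤ c1 + 2 * t ^ (-(1/4):ℝ) := by
      have ha1 : deriv u δ₀ ≤ |deriv u δ₀| := le_abs_self _
      rw [hc1_def]
      nlinarith [abs_nonneg (Real.log δ₀), abs_nonneg (deriv u δ₀)]
    rw [abs_le]
    have hprod : 0 ≤ c1 * (t ^ (-(1/4):ℝ) - 1) := mul_nonneg hc1nn (by linarith)
    constructor
    · nlinarith [hlow]
    · nlinarith [hhigh]
  obtain ⟨D, hDD_def⟩ : ∃ d : ℝ, d = 4*(c1+2)/3 := ⟨_, rfl⟩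
  have hDpos : 0 < D := by rw [hDD_def]; linarith
  have hF : ∀ t ∈ Ioc (0:ℝ) δ₀, |u t| ≤ D * t ^ ((3:ℝ)/4) := by
    intro t ht
    have h2 := hlimb ((c1+2)/(-(1/4)+1)) (-(1/4)+1) (by norm_num)
      (hstep (c1+2) (-(1/4)) (by linarith) (by norm_num) (by norm_num) hE) t ht
    have e1 : (-(1/4)+1 : ℝ) = 3/4 := by norm_num
    rw [e1] at h2
    have e2 : ((c1+2)/((3:ℝ)/4) : ℝ) = D := by rw [hDD_def]; ring
    rw [e2] at h2
    exact h2

  -- majorant for f near 0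
  have hfmaj : ∀ s ∈ Ioc (0:ℝ) δ₀, f s ≤ D^2/8 * s ^ (-(1/2):ℝ) + lam/2 := by
    intro s hs
    have hs0 := hs.1
    have hFs := hF s hs
    show u s ^2/(8*s^2) + lam/2 ≤ _
    have hu2 : u s ^ 2 ≤ D^2 * s ^ ((3:ℝ)/2) := by
      have he : (s ^ ((3:ℝ)/4))^2 = s ^ ((3:ℝ)/2) := by
        rw [← Real.rpow_natCast (s ^ ((3:ℝ)/4)) 2, ← Real.rpow_mul hs0.le]; norm_num
      nlinarith [sq_abs (u s), abs_nonneg (u s), Real.rpow_nonneg hs0.le ((3:ℝ)/4)]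
    have hid : s ^ ((3:ℝ)/2) = s ^ (-(1/2):ℝ) * s^2 := by
      rw [← Real.rpow_natCast s 2, ← Real.rpow_add hs0]
      norm_num
    have h8 : (0:ℝ) < 8*s^2 := by nlinarith
    have hkey : u s^2/(8*s^2) ≤ D^2/8 * s^(-(1/2):ℝ) := by
      rw [div_le_iff₀ h8]
      calc u s ^2 ≤ D^2 * s ^ ((3:ℝ)/2) := hu2
        _ = D^2/8 * s^(-(1/2):ℝ) * (8*s^2) := by rw [hid]; ring
    linarith
  have hphi_int : ∀ b:ℝ, 0 < b → b ≤ δ₀ → IntervalIntegrable f volume 0 b := by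
    intro b hb hbδ
    rw [intervalIntegrable_iff_integrableOn_Ioc_of_le hb.le]
    apply integrableOn_of_bound (h := fun s => D^2/8 * s ^ (-(1/2):ℝ) + lam/2)
    · exact hcf.mono (fun z hz => ⟨hz.1, lt_of_le_of_lt (le_trans hz.2 hbδ) hδ₀h⟩)
    · have h1 : IntervalIntegrable (fun s:ℝ => D^2/8 * s ^ (-(1/2):ℝ) + lam/2) volume 0 b :=
        ((intervalIntegrable_rpow' (by norm_num)).const_mul _).add intervalIntegrable_const
      rwa [intervalIntegrable_iff_integrableOn_Ioc_of_le hb.le] at h1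
    · intro s hs
      rw [abs_of_nonneg (hf0 s)]
      exact hfmaj s ⟨hs.1, le_trans hs.2 hbδ⟩
  have hf_t_int : ∀ a b : ℝ, 0 < a → a ≤ b → b < 1/2 → IntervalIntegrable f volume a b := by
    intro a b ha hab hb
    apply (hcf.mono ?_).intervalIntegrable
    rw [uIcc_of_le hab]
    exact fun z hz => ⟨lt_of_lt_of_le ha hz.1, lt_of_le_of_lt hz.2 hb⟩
  obtain ⟨L, hL_def⟩ : ∃ L:ℝ, L = deriv u δ₀ - ∫ s in (0:ℝ)..δ₀, f s := ⟨_, rfl⟩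
  have hH : ∀ t ∈ Ioc (0:ℝ) δ₀, deriv u t = L + ∫ s in (0:ℝ)..t, f s := by
    intro t ht
    have h1 : (∫ s in (0:ℝ)..t, f s) + (∫ s in t..δ₀, f s) = ∫ s in (0:ℝ)..δ₀, f s :=
      integral_add_adjacent_intervals (hphi_int t ht.1 ht.2) (hf_t_int t δ₀ ht.1 ht.2 hδ₀h)
    have h2 := ftc_f t δ₀ ht.1 ht.2 hδ₀h
    rw [hL_def]
    linarith
  have hψbd : ∀ t ∈ Ioc (0:ℝ) δ₀, 0 ≤ (∫ s in (0:ℝ)..t, f s) ∧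
      (∫ s in (0:ℝ)..t, f s) ≤ D^2/4 * t ^ ((1/2):ℝ) + lam/2 * t := by
    intro t ht
    refine ⟨intervalIntegral.integral_nonneg ht.1.le (fun x _ => hf0 x), ?_⟩
    have hmaji : IntervalIntegrable (fun s:ℝ => D^2/8 * s ^ (-(1/2):ℝ) + lam/2) volume 0 t :=
      ((intervalIntegrable_rpow' (by norm_num)).const_mul _).add intervalIntegrable_const
    have h1 : (∫ s in (0:ℝ)..t, f s) ≤ ∫ s in (0:ℝ)..t, (D^2/8 * s ^ (-(1/2):ℝ) + lam/2) := by
      rw [intervalIntegral.integral_of_le ht.1.le, intervalIntegral.integral_of_le ht.1.le]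
      refine setIntegral_mono_on
        ((intervalIntegrable_iff_integrableOn_Ioc_of_le ht.1.le).1 (hphi_int t ht.1 ht.2))
        ((intervalIntegrable_iff_integrableOn_Ioc_of_le ht.1.le).1 hmaji)
        measurableSet_Ioc ?_
      intro s hs
      exact hfmaj s ⟨hs.1, le_trans hs.2 ht.2⟩
    have h2 : ∫ s in (0:ℝ)..t, (D^2/8 * s ^ (-(1/2):ℝ) + lam/2)
        = D^2/4 * t^((1/2):ℝ) + lam/2 * t := by
      rw [intervalIntegral.integral_add ((intervalIntegrable_rpow' (by norm_num)).const_mul _)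
        intervalIntegrable_const]
      rw [intervalIntegral.integral_const_mul, integral_rpow (Or.inl (by norm_num))]
      rw [intervalIntegral.integral_const, smul_eq_mul]
      rw [Real.zero_rpow (by norm_num)]
      norm_num
      ring
    linarith
  -- u as integral of deriv u
  have hu'int : ∀ b:ℝ, 0 < b → b ≤ δ₀ → IntervalIntegrable (deriv u) volume 0 b := by
    intro b hb hbδ
    rw [intervalIntegrable_iff_integrableOn_Ioc_of_le hb.le]
    apply integrableOn_of_bound (h := fun s => (c1+2) * s ^ (-(1/4):ℝ))
    · exact hcu'.mono (fun z hz => ⟨hz.1, lt_of_le_of_lt (le_trans hz.2 hbδ) hδ₀h⟩)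
    · have h1 : IntervalIntegrable (fun s:ℝ => (c1+2) * s ^ (-(1/4):ℝ)) volume 0 b :=
        (intervalIntegrable_rpow' (by norm_num)).const_mul _
      rwa [intervalIntegrable_iff_integrableOn_Ioc_of_le hb.le] at h1
    · intro s hs
      exact hE s ⟨hs.1, le_trans hs.2 hbδ⟩
  have hu'bd : ∀ b:ℝ, 0 < b → b ≤ δ₀ → |∫ s in (0:ℝ)..b, deriv u s| ≤ D * b ^ ((3:ℝ)/4) := by
    intro b hb hbδ
    have hmaji : IntervalIntegrable (fun s:ℝ => (c1+2) * s ^ (-(1/4):ℝ)) volume 0 b :=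
      (intervalIntegrable_rpow' (by norm_num)).const_mul _
    have h1 : |∫ s in (0:ℝ)..b, deriv u s| ≤ ∫ s in (0:ℝ)..b, (c1+2) * s ^ (-(1/4):ℝ) := by
      calc |∫ s in (0:ℝ)..b, deriv u s| ≤ ∫ s in (0:ℝ)..b, |deriv u s| :=
            intervalIntegral.abs_integral_le_integral_abs hb.le
        _ ≤ _ := by
            rw [intervalIntegral.integral_of_le hb.le, intervalIntegral.integral_of_le hb.le]
            refine setIntegral_mono_on
              ((intervalIntegrable_iff_integrableOn_Ioc_of_le hb.le).1 (hu'int b hb hbδ).abs)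
              ((intervalIntegrable_iff_integrableOn_Ioc_of_le hb.le).1 hmaji)
              measurableSet_Ioc ?_
            intro s hs
            exact hE s ⟨hs.1, le_trans hs.2 hbδ⟩
    have h2 : ∫ s in (0:ℝ)..b, (c1+2) * s ^ (-(1/4):ℝ) = D * b ^ ((3:ℝ)/4) := by
      rw [intervalIntegral.integral_const_mul, integral_rpow (Or.inl (by norm_num))]
      rw [Real.zero_rpow (by norm_num), hDD_def]
      norm_num
      ring
    linarith
  have hJ : ∀ t ∈ Ioc (0:ℝ) δ₀, u t = ∫ s in (0:ℝ)..t, deriv u s := by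
    intro t ht
    have hzero : u t - (∫ s in (0:ℝ)..t, deriv u s) = 0 := by
      apply eq_zero_of_const_of_tendsto (g := fun r => u r - ∫ s in (0:ℝ)..r, deriv u s) ht.1
      · intro r hr
        have h1 : (∫ s in (0:ℝ)..r, deriv u s) + (∫ s in r..t, deriv u s)
            = ∫ s in (0:ℝ)..t, deriv u s :=
          integral_add_adjacent_intervals (hu'int r hr.1 (le_trans hr.2.le ht.2)) (by
            apply (hcu'.mono ?_).intervalIntegrable
            rw [uIcc_of_le hr.2.le]
            exact fun z hz => ⟨lt_of_lt_of_le hr.1 hz.1,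
              lt_of_le_of_lt (le_trans hz.2 ht.2) hδ₀h⟩)
        have h2 := ftc_u r t hr.1 hr.2.le (lt_of_le_of_lt ht.2 hδ₀h)
        show u r - (∫ s in (0:ℝ)..r, deriv u s) = u t - ∫ s in (0:ℝ)..t, deriv u s
        linarith
      · apply squeeze_zero_norm' (a := fun r => 2 * r ^ ((1/2):ℝ) + D * r ^ ((3:ℝ)/4))
        · filter_upwards [Ioo_mem_nhdsGT_of_mem
            (⟨le_refl _, hδ₀pos⟩ : (0:ℝ) ∈ Ico (0:ℝ) δ₀)] with r hr
          have h1 := hD2 r ⟨hr.1, hr.2.le⟩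
          have h2 := hu'bd r hr.1 hr.2.le
          rw [Real.norm_eq_abs]
          calc |u r - ∫ s in (0:ℝ)..r, deriv u s|
              ≤ |u r| + |∫ s in (0:ℝ)..r, deriv u s| := abs_sub _ _
            _ ≤ 2 * r ^ ((1/2):ℝ) + D * r ^ ((3:ℝ)/4) := by linarith
        · have t1 : Tendsto (fun r:ℝ => 2 * r ^ ((1/2):ℝ)) (𝓝[>] (0:ℝ)) (𝓝 (2 * 0)) :=
            (rpow_tendsto (by norm_num)).const_mul 2
          have t2 : Tendsto (fun r:ℝ => D * r ^ ((3:ℝ)/4)) (𝓝[>] (0:ℝ)) (𝓝 (D * 0)) :=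
            (rpow_tendsto (by norm_num)).const_mul D
          have := t1.add t2
          norm_num at this
          exact this
    linarith
  -- u t / t tends to L
  have hsand : ∀ t ∈ Ioc (0:ℝ) δ₀, L ≤ u t / t ∧
      u t / t ≤ L + (D^2/4 * t ^ ((1/2):ℝ) + lam/2 * t) := by
    intro t ht
    have hJt := hJ t ht
    have hsub : (∫ s in (0:ℝ)..t, deriv u s) - (∫ s in (0:ℝ)..t, (L:ℝ))
        = ∫ s in (0:ℝ)..t, (deriv u s - L) :=
      (intervalIntegral.integral_sub (hu'int t ht.1 ht.2) intervalIntegrable_const).symm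
    have hLt : (∫ s in (0:ℝ)..t, (L:ℝ)) = L * t := by
      rw [intervalIntegral.integral_const, smul_eq_mul]; ring
    have key : u t - L * t = ∫ s in (0:ℝ)..t, (deriv u s - L) := by
      rw [← hsub, hLt, ← hJt]
    have hlow : 0 ≤ ∫ s in (0:ℝ)..t, (deriv u s - L) := by
      rw [intervalIntegral.integral_of_le ht.1.le]
      apply setIntegral_nonneg measurableSet_Ioc
      intro s hs
      have h1 := hH s ⟨hs.1, le_trans hs.2 ht.2⟩
      have h0 := (hψbd s ⟨hs.1, le_trans hs.2 ht.2⟩).1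
      linarith
    have hup : (∫ s in (0:ℝ)..t, (deriv u s - L))
        ≤ (D^2/4 * t ^ ((1/2):ℝ) + lam/2 * t) * t := by
      rw [intervalIntegral.integral_of_le ht.1.le]
      have hmono : ∀ s ∈ Ioc (0:ℝ) t, deriv u s - L ≤ D^2/4 * t ^ ((1/2):ℝ) + lam/2 * t := by
        intro s hs
        have h1 := hH s ⟨hs.1, le_trans hs.2 ht.2⟩
        have h2 := (hψbd s ⟨hs.1, le_trans hs.2 ht.2⟩).2
        have h3 : s ^ ((1/2):ℝ) ≤ t ^ ((1/2):ℝ) :=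
          Real.rpow_le_rpow hs.1.le hs.2 (by norm_num)
        nlinarith [hs.2, hs.1.le, hDpos.le]
      calc ∫ s in Ioc (0:ℝ) t, (deriv u s - L)
          ≤ ∫ _s in Ioc (0:ℝ) t, (D^2/4 * t ^ ((1/2):ℝ) + lam/2*t) :=
            setIntegral_mono_on
              ((intervalIntegrable_iff_integrableOn_Ioc_of_le ht.1.le).1
                ((hu'int t ht.1 ht.2).sub intervalIntegrable_const))
              (integrableOn_const measure_Ioc_lt_top.ne)
              measurableSet_Ioc hmono
        _ = (D^2/4 * t ^ ((1/2):ℝ) + lam/2*t) * t := by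
            rw [setIntegral_const, smul_eq_mul, Real.volume_real_Ioc_of_le ht.1.le, sub_zero]
            ring
    constructor
    · rw [le_div_iff₀ ht.1]
      linarith
    · rw [div_le_iff₀ ht.1]
      nlinarith
  have hKt : Tendsto (fun t => u t / t) (𝓝[>] (0:ℝ)) (𝓝 L) := by
    have hupper : Tendsto (fun t:ℝ => L + (D^2/4 * t ^ ((1/2):ℝ) + lam/2 * t))
        (𝓝[>] (0:ℝ)) (𝓝 L) := by
      have t1 : Tendsto (fun r:ℝ => D^2/4 * r ^ ((1/2):ℝ)) (𝓝[>] (0:ℝ)) (𝓝 (D^2/4 * 0)) :=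
        (rpow_tendsto (by norm_num)).const_mul _
      have t2 : Tendsto (fun r:ℝ => lam/2 * r) (𝓝[>] (0:ℝ)) (𝓝 (lam/2 * 0)) :=
        ((continuous_const.mul continuous_id).tendsto 0).mono_left nhdsWithin_le_nhds
      have := tendsto_const_nhds (x := L) (f := 𝓝[>] (0:ℝ)).add (t1.add t2)
      norm_num at this
      exact this
    refine tendsto_of_tendsto_of_tendsto_of_le_of_le' tendsto_const_nhds hupper ?_ ?_
    · filter_upwards [Ioo_mem_nhdsGT_of_mem
        (⟨le_refl _, hδ₀pos⟩ : (0:ℝ) ∈ Ico (0:ℝ) δ₀)] with r hr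
      exact (hsand r ⟨hr.1, hr.2.le⟩).1
    · filter_upwards [Ioo_mem_nhdsGT_of_mem
        (⟨le_refl _, hδ₀pos⟩ : (0:ℝ) ∈ Ico (0:ℝ) δ₀)] with r hr
      exact (hsand r ⟨hr.1, hr.2.le⟩).2
  have hgoal2 : ∃ LL : ℝ, Tendsto (fun t => |u t| / t) (𝓝[>] (0:ℝ)) (𝓝 LL) := by
    refine ⟨|L|, ?_⟩
    apply hKt.abs.congr'
    filter_upwards [self_mem_nhdsWithin] with t ht
    rw [abs_div, abs_of_pos (mem_Ioi.1 ht)]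

  -- global bounds
  obtain ⟨K, hK⟩ := (isCompact_Icc (a := δ₀) (b := (1/2:ℝ))).exists_bound_of_continuousOn
      ((hu δ₀ (1/2) hδ₀pos le_rfl).continuousOn)
  have hKabs : ∀ x ∈ Icc δ₀ (1/2:ℝ), |u x| ≤ K := by
    intro x hx
    simpa [Real.norm_eq_abs] using hK x hx
  have hK0 : 0 ≤ K := le_trans (abs_nonneg _) (hKabs δ₀ ⟨le_refl _, hδ₀h.le⟩)
  have hcu_Ioc : ContinuousOn u (Ioc (0:ℝ) (1/2)) := by
    intro x hx
    rcases lt_or_eq_of_le hx.2 with h | h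
    · exact ((hCD x ⟨hx.1, h⟩).continuousAt).continuousWithinAt
    · have hbase : ContinuousWithinAt u (Icc δ₀ (1/2:ℝ)) x := by
        apply ((hu δ₀ (1/2) hδ₀pos le_rfl).continuousOn).continuousWithinAt
        rw [h]; exact ⟨hδ₀h.le, le_refl _⟩
      apply hbase.mono_of_mem_nhdsWithin
      apply mem_nhdsWithin.2
      refine ⟨Ioi δ₀, isOpen_Ioi, ?_, fun z hz => ⟨hz.1.le, hz.2.2⟩⟩
      rw [h]; exact hδ₀h
  set g1 : ℝ → ℝ := fun s => u s ^ 2 / (4 * s) with hg1_def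
  set g2 : ℝ → ℝ := fun s => u s ^ 2 / (4 * s ^ 2) * (1/2 - s) with hg2_def
  have hg1c : ContinuousOn g1 (Ioc (0:ℝ) (1/2)) := by
    apply ContinuousOn.div (hcu_Ioc.pow 2) (by fun_prop)
    intro x hx
    have hx0 := hx.1
    positivity
  have hg2c : ContinuousOn g2 (Ioc (0:ℝ) (1/2)) := by
    refine ContinuousOn.mul (ContinuousOn.div (hcu_Ioc.pow 2) (by fun_prop) ?_) (by fun_prop)
    intro x hx
    have hx0 := hx.1
    positivity
  obtain ⟨MA, hMA_def⟩ : ∃ m : ℝ, m = 1 + K^2/(4*δ₀) := ⟨_, rfl⟩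
  have hMA0 : 0 ≤ MA := by rw [hMA_def]; positivity
  have hg1bd : ∀ s ∈ Ioc (0:ℝ) (1/2), |g1 s| ≤ MA := by
    intro s hs
    have hs0 := hs.1
    have habs : |g1 s| = u s ^2/(4*s) := abs_of_nonneg (by positivity)
    rw [habs, hMA_def]
    rcases le_total s δ₀ with h | h
    · have h2 := hu2le s ⟨hs0, h⟩
      have h3 : u s ^2/(4*s) ≤ 1 := by
        rw [div_le_one (by positivity)]
        linarith
      have : (0:ℝ) ≤ K^2/(4*δ₀) := by positivity
      linarith
    · have h2 : u s ^ 2 ≤ K^2 := by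
        have := hKabs s ⟨h, hs.2⟩
        nlinarith [abs_nonneg (u s), sq_abs (u s)]
      have h3 : u s ^2/(4*s) ≤ K^2/(4*δ₀) :=
        div_le_div₀ (by positivity) h2 (by positivity) (by linarith)
      linarith
  obtain ⟨MB', hMB'_def⟩ : ∃ m : ℝ, m = K^2/(8*δ₀^2) := ⟨_, rfl⟩
  have hMB'0 : 0 ≤ MB' := by rw [hMB'_def]; positivity
  have hg2nn : ∀ s ∈ Ioc (0:ℝ) (1/2), 0 ≤ g2 s := by
    intro s hs
    have hs0 := hs.1
    have h12 : (0:ℝ) ≤ 1/2 - s := by linarith [hs.2]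
    positivity
  have hg2bd : ∀ s ∈ Ioc (0:ℝ) (1/2), |g2 s| ≤ D^2/8 * s^(-(1/2):ℝ) + MB' := by
    intro s hs
    have hs0 := hs.1
    rw [abs_of_nonneg (hg2nn s hs)]
    have hq : (0:ℝ) ≤ u s ^2/(4*s^2) := by positivity
    have hhalf : g2 s ≤ u s ^2/(8*s^2) := by
      have h12 : 1/2 - s ≤ 1/2 := by linarith [hs0]
      have : g2 s ≤ u s ^2/(4*s^2) * (1/2) := by
        rw [hg2_def]
        exact mul_le_mul_of_nonneg_left h12 hq
      calc g2 s ≤ u s ^2/(4*s^2) * (1/2) := this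
        _ = u s ^2/(8*s^2) := by ring
    rcases le_total s δ₀ with h | h
    · have h1 := hfmaj s ⟨hs0, h⟩
      have h2 : u s ^2/(8*s^2) ≤ D^2/8 * s^(-(1/2):ℝ) := by
        have : u s ^ 2 / (8 * s ^ 2) + lam / 2 ≤ D^2/8 * s ^ (-(1/2):ℝ) + lam/2 := h1
        linarith
      linarith
    · have h2 : u s ^ 2 ≤ K^2 := by
        have := hKabs s ⟨h, hs.2⟩
        nlinarith [abs_nonneg (u s), sq_abs (u s)]
      have h3 : u s ^2/(8*s^2) ≤ MB' := by
        rw [hMB'_def]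
        apply div_le_div₀ (by positivity) h2 (by positivity)
        nlinarith
      have h4 : (0:ℝ) ≤ D^2/8 * s^(-(1/2):ℝ) := by positivity
      linarith
  have hg1I : IntegrableOn g1 (Ioc (0:ℝ) (1/2)) volume := by
    apply integrableOn_of_bound hg1c ?_ hg1bd
    exact integrableOn_const measure_Ioc_lt_top.ne
  have hg2I : IntegrableOn g2 (Ioc (0:ℝ) (1/2)) volume := by
    apply integrableOn_of_bound hg2c ?_ hg2bd
    have h1 : IntervalIntegrable (fun s:ℝ => D^2/8 * s ^ (-(1/2):ℝ) + MB') volume 0 (1/2) :=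
      ((intervalIntegrable_rpow' (by norm_num)).const_mul _).add intervalIntegrable_const
    exact (intervalIntegrable_iff_integrableOn_Ioc_of_le (by norm_num)).1 h1
  have hg1ii : ∀ a b : ℝ, 0 ≤ a → a ≤ 1/2 → 0 ≤ b → b ≤ 1/2 → IntervalIntegrable g1 volume a b := by
    intro a b ha ha2 hb0 hb
    rw [intervalIntegrable_iff]
    exact hg1I.mono_set (Set.Ioc_subset_Ioc (le_min ha hb0) (sup_le ha2 hb))
  have hg2ii : ∀ a b : ℝ, 0 ≤ a → a ≤ 1/2 → 0 ≤ b → b ≤ 1/2 → IntervalIntegrable g2 volume a b := by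
    intro a b ha ha2 hb0 hb
    rw [intervalIntegrable_iff]
    exact hg2I.mono_set (Set.Ioc_subset_Ioc (le_min ha hb0) (sup_le ha2 hb))

  -- A, B and their bounds
  set A : ℝ → ℝ := fun x => ∫ s in (0:ℝ)..x, g1 s with hA_def
  set B : ℝ → ℝ := fun x => ∫ s in x..(1/2:ℝ), g2 s with hB_def
  have hAbd : ∀ x ∈ Ioc (0:ℝ) (1/2), |A x| ≤ MA * x := by
    intro x hx
    have h1 : |A x| ≤ ∫ s in (0:ℝ)..x, MA := by
      calc |A x| ≤ ∫ s in (0:ℝ)..x, |g1 s| :=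
            intervalIntegral.abs_integral_le_integral_abs hx.1.le
        _ ≤ ∫ _s in (0:ℝ)..x, MA := by
            rw [intervalIntegral.integral_of_le hx.1.le, intervalIntegral.integral_of_le hx.1.le]
            refine setIntegral_mono_on
              ((intervalIntegrable_iff_integrableOn_Ioc_of_le hx.1.le).1
                (hg1ii 0 x le_rfl (by norm_num) hx.1.le hx.2).abs)
              (integrableOn_const measure_Ioc_lt_top.ne)
              measurableSet_Ioc ?_
            intro s hs
            exact hg1bd s ⟨hs.1, le_trans hs.2 hx.2⟩
    rw [intervalIntegral.integral_const, smul_eq_mul, sub_zero, mul_comm] at h1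
    exact h1
  have hφ2ii : ∀ a b : ℝ, IntervalIntegrable (fun s:ℝ => D^2/8 * s ^ (-(1/2):ℝ) + MB') volume a b :=
    fun a b => ((intervalIntegrable_rpow' (by norm_num)).const_mul _).add intervalIntegrable_const
  obtain ⟨MB, hMB_def⟩ : ∃ m:ℝ, m = ∫ s in (0:ℝ)..(1/2:ℝ), (D^2/8 * s ^ (-(1/2):ℝ) + MB') := ⟨_, rfl⟩
  have hMB0 : 0 ≤ MB := by
    rw [hMB_def]
    apply intervalIntegral.integral_nonneg (by norm_num)
    intro s hs
    have hs0 := hs.1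
    positivity
  have hBbd' : ∀ x ∈ Ioc (0:ℝ) (1/2:ℝ), |B x| ≤ ∫ s in x..(1/2:ℝ), (D^2/8 * s ^ (-(1/2):ℝ) + MB') := by
    intro x hx
    calc |B x| ≤ ∫ s in x..(1/2:ℝ), |g2 s| :=
          intervalIntegral.abs_integral_le_integral_abs hx.2
      _ ≤ _ := by
          rw [intervalIntegral.integral_of_le hx.2, intervalIntegral.integral_of_le hx.2]
          refine setIntegral_mono_on
            ((intervalIntegrable_iff_integrableOn_Ioc_of_le hx.2).1
              (hg2ii x (1/2) hx.1.le hx.2 (by norm_num) le_rfl).abs)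
            ((intervalIntegrable_iff_integrableOn_Ioc_of_le hx.2).1 (hφ2ii x (1/2)))
            measurableSet_Ioc ?_
          intro s hs
          exact hg2bd s ⟨lt_trans hx.1 hs.1, hs.2⟩
  have hBbd : ∀ x ∈ Ioc (0:ℝ) (1/2), |B x| ≤ MB := by
    intro x hx
    have h1 := hBbd' x hx
    have h3 : (∫ s in (0:ℝ)..x, (D^2/8 * s ^ (-(1/2):ℝ) + MB'))
        + (∫ s in x..(1/2:ℝ), (D^2/8 * s ^ (-(1/2):ℝ) + MB'))
        = ∫ s in (0:ℝ)..(1/2:ℝ), (D^2/8 * s ^ (-(1/2):ℝ) + MB') :=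
      integral_add_adjacent_intervals (hφ2ii 0 x) (hφ2ii x (1/2))
    have h4 : 0 ≤ ∫ s in (0:ℝ)..x, (D^2/8 * s ^ (-(1/2):ℝ) + MB') := by
      apply intervalIntegral.integral_nonneg hx.1.le
      intro s hs
      have hs0 := hs.1
      positivity
    rw [hMB_def]
    linarith
  -- derivatives of A and B
  have hg1ca : ∀ t ∈ Ioo (0:ℝ) (1/2), ContinuousAt g1 t := by
    intro t ht
    have h1 : ContinuousAt u t := (hCD t ht).continuousAt
    have ht0 : t ≠ 0 := ne_of_gt ht.1
    exact (h1.pow 2).div (by fun_prop) (by positivity)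
  have hg2ca : ∀ t ∈ Ioo (0:ℝ) (1/2), ContinuousAt g2 t := by
    intro t ht
    have h1 : ContinuousAt u t := (hCD t ht).continuousAt
    have ht0 : t ≠ 0 := ne_of_gt ht.1
    exact ((h1.pow 2).div (by fun_prop) (by positivity)).mul (by fun_prop)
  have hg1sm : ∀ t ∈ Ioo (0:ℝ) (1/2), StronglyMeasurableAtFilter g1 (𝓝 t) volume :=
    fun t ht => (hg1c.mono Ioo_subset_Ioc_self).stronglyMeasurableAtFilter isOpen_Ioo t ht
  have hg2sm : ∀ t ∈ Ioo (0:ℝ) (1/2), StronglyMeasurableAtFilter g2 (𝓝 t) volume :=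
    fun t ht => (hg2c.mono Ioo_subset_Ioc_self).stronglyMeasurableAtFilter isOpen_Ioo t ht
  have hAder : ∀ t ∈ Ioo (0:ℝ) (1/2), HasDerivAt A (g1 t) t := by
    intro t ht
    have hd : HasDerivAt (fun x => A (t/2) + ∫ s in (t/2)..x, g1 s) (g1 t) t := by
      apply HasDerivAt.const_add
      exact intervalIntegral.integral_hasDerivAt_right
        (hg1ii (t/2) t (by linarith [ht.1]) (by linarith [ht.2]) ht.1.le ht.2.le)
        (hg1sm t ht) (hg1ca t ht)
    apply hd.congr_of_eventuallyEq
    filter_upwards [isOpen_Ioo.mem_nhds ht] with x hx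
    have h1 : (∫ s in (0:ℝ)..(t/2), g1 s) + (∫ s in (t/2)..x, g1 s) = ∫ s in (0:ℝ)..x, g1 s :=
      integral_add_adjacent_intervals
        (hg1ii 0 (t/2) le_rfl (by norm_num) (by linarith [ht.1]) (by linarith [ht.2]))
        (hg1ii (t/2) x (by linarith [ht.1]) (by linarith [ht.2]) hx.1.le hx.2.le)
    show (∫ s in (0:ℝ)..x, g1 s) = (∫ s in (0:ℝ)..(t/2), g1 s) + ∫ s in (t/2)..x, g1 s
    linarith
  have hBder : ∀ t ∈ Ioo (0:ℝ) (1/2), HasDerivAt B (-(g2 t)) t := by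
    intro t ht
    have hd : HasDerivAt (fun x => (∫ s in (t/2)..(1/2:ℝ), g2 s) - ∫ s in (t/2)..x, g2 s)
        (-(g2 t)) t := by
      apply HasDerivAt.const_sub
      exact intervalIntegral.integral_hasDerivAt_right
        (hg2ii (t/2) t (by linarith [ht.1]) (by linarith [ht.2]) ht.1.le ht.2.le)
        (hg2sm t ht) (hg2ca t ht)
    apply hd.congr_of_eventuallyEq
    filter_upwards [isOpen_Ioo.mem_nhds ht] with x hx
    have h1 : (∫ s in (t/2)..x, g2 s) + (∫ s in x..(1/2:ℝ), g2 s) = ∫ s in (t/2)..(1/2:ℝ), g2 s :=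
      integral_add_adjacent_intervals
        (hg2ii (t/2) x (by linarith [ht.1]) (by linarith [ht.2]) hx.1.le hx.2.le)
        (hg2ii x (1/2) hx.1.le hx.2.le (by norm_num) le_rfl)
    show (∫ s in x..(1/2:ℝ), g2 s) = (∫ s in (t/2)..(1/2:ℝ), g2 s) - ∫ s in (t/2)..x, g2 s
    linarith
  -- F and H
  set Hf : ℝ → ℝ := fun t => deriv u t + (-A t + B t + lam/8 - lam/2*t) with hHf_def
  set Ff : ℝ → ℝ := fun t => u t + ((1/2 - t)*A t + t*B t + lam/4*t*(1/2-t)) with hFf_def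
  have hFder : ∀ t ∈ Ioo (0:ℝ) (1/2), HasDerivAt Ff (Hf t) t := by
    intro t ht
    have hAt := hAder t ht
    have hBt := hBder t ht
    have hd1 : HasDerivAt (fun x => (1/2 - x)*A x) ((-1)*A t + (1/2-t)*(g1 t)) t :=
      HasDerivAt.mul ((hasDerivAt_id t).const_sub (1/2)) hAt
    have hd2 : HasDerivAt (fun x => x*B x) (1*B t + t*(-(g2 t))) t :=
      HasDerivAt.mul (hasDerivAt_id t) hBt
    have hd3 : HasDerivAt (fun x => lam/4*x*(1/2-x))
        ((lam/4*1)*(1/2-t) + (lam/4*t)*(-1)) t :=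
      HasDerivAt.mul ((hasDerivAt_id t).const_mul (lam/4)) ((hasDerivAt_id t).const_sub (1/2))
    have hd : HasDerivAt Ff (deriv u t + (((-1)*A t + (1/2-t)*(g1 t) + (1*B t + t*(-(g2 t))))
        + ((lam/4*1)*(1/2-t) + (lam/4*t)*(-1)))) t :=
      (hder1 t ht).add ((hd1.add hd2).add hd3)
    have hval : deriv u t + (((-1)*A t + (1/2-t)*(g1 t) + (1*B t + t*(-(g2 t))))
        + ((lam/4*1)*(1/2-t) + (lam/4*t)*(-1))) = Hf t := by
      rw [hHf_def, hg1_def, hg2_def]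
      simp only []
      have ht0 : t ≠ 0 := ne_of_gt ht.1
      field_simp
      ring
    rwa [hval] at hd
  have hHder2 : ∀ t ∈ Ioo (0:ℝ) (1/2), HasDerivAt Hf 0 t := by
    intro t ht
    have hAt := hAder t ht
    have hBt := hBder t ht
    have hd := (hder2 t ht).add
      (((hAt.neg.add hBt).add_const (lam/8)).sub ((hasDerivAt_id t).const_mul (lam/2)))
    have hval : f t + ((-(g1 t) + (-(g2 t))) - lam/2*1) = 0 := by
      rw [hf_def, hg1_def, hg2_def]
      simp only []
      have ht0 : t ≠ 0 := ne_of_gt ht.1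
      field_simp
      ring
    rwa [hval] at hd
  have hHconst : ∀ x ∈ Ioo (0:ℝ) (1/2), ∀ y ∈ Ioo (0:ℝ) (1/2), Hf x = Hf y := by
    intro x hx y hy
    rcases le_total x y with h | h
    · exact eq_of_hasDerivAt_zero hHder2 x hx y hy h
    · exact (eq_of_hasDerivAt_zero hHder2 y hy x hx h).symm
  obtain ⟨bb, hbb_def⟩ : ∃ b:ℝ, b = Hf (1/4) := ⟨_, rfl⟩
  have hmem14 : (1/4:ℝ) ∈ Ioo (0:ℝ) (1/2) := ⟨by norm_num, by norm_num⟩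
  have hGder : ∀ z ∈ Ioo (0:ℝ) (1/2), HasDerivAt (fun w => Ff w - bb*w) 0 z := by
    intro z hz
    have h1 := (hFder z hz).sub ((hasDerivAt_id z).const_mul bb)
    have h2 : Hf z - bb*1 = 0 := by
      rw [hbb_def, hHconst z hz (1/4) hmem14]; ring
    rwa [h2] at h1
  obtain ⟨aa, haa_def⟩ : ∃ a:ℝ, a = Ff (1/4) - bb*(1/4) := ⟨_, rfl⟩
  have hFaff : ∀ x ∈ Ioo (0:ℝ) (1/2), Ff x = aa + bb*x := by
    intro x hx
    have h0 : Ff x - bb*x = Ff (1/4) - bb*(1/4) := by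
      rcases le_total x (1/4:ℝ) with h | h
      · exact eq_of_hasDerivAt_zero hGder x hx (1/4) hmem14 h
      · exact (eq_of_hasDerivAt_zero hGder (1/4) hmem14 x hx h).symm
    rw [haa_def]
    linarith
  -- limit of Ff at 0+
  have hF0 : Tendsto Ff (𝓝[>] (0:ℝ)) (𝓝 0) := by
    have h1 : Tendsto (fun x => Ff x - u x) (𝓝[>] (0:ℝ)) (𝓝 0) := by
      apply squeeze_zero_norm' (a := fun x => (MA + MB + lam)*x)
      · filter_upwards [Ioo_mem_nhdsGT_of_mem
          (⟨le_refl _, by norm_num⟩ : (0:ℝ) ∈ Ico (0:ℝ) (1/2:ℝ))] with x hx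
        have hA1 := hAbd x ⟨hx.1, hx.2.le⟩
        have hB1 := hBbd x ⟨hx.1, hx.2.le⟩
        have hx0 := hx.1
        have hx2 := hx.2
        show |Ff x - u x| ≤ (MA + MB + lam)*x
        have he : Ff x - u x = (1/2 - x)*A x + x*B x + lam/4*x*(1/2-x) := by
          rw [hFf_def]; simp only []; ring
        rw [he]
        have h12 : (0:ℝ) ≤ 1/2 - x := by linarith
        have h0MAx : (0:ℝ) ≤ MA * x := le_trans (abs_nonneg (A x)) (hAbd x ⟨hx0, hx2.le⟩)
        have e1 : |(1/2 - x)*A x| ≤ MA * x := by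
          rw [abs_mul, abs_of_nonneg h12]
          calc (1/2 - x) * |A x| ≤ (1/2 - x) * (MA * x) :=
                mul_le_mul_of_nonneg_left hA1 h12
            _ ≤ 1 * (MA * x) := mul_le_mul_of_nonneg_right (by linarith) h0MAx
            _ = MA * x := one_mul _
        have e2 : |x*B x| ≤ MB * x := by
          rw [abs_mul, abs_of_nonneg hx0.le]
          calc x * |B x| ≤ x * MB := mul_le_mul_of_nonneg_left hB1 hx0.le
            _ ≤ MB * x := by linarith [mul_comm x MB]
        have e3 : |lam/4*x*(1/2-x)| ≤ lam * x := by
          have q0 : (0:ℝ) ≤ lam/4*x := mul_nonneg (by linarith) hx0.le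
          rw [abs_of_nonneg (mul_nonneg q0 h12)]
          have q1 : lam/4*x*(1/2-x) ≤ lam/4*x*(1/2) :=
            mul_le_mul_of_nonneg_left (by linarith) q0
          nlinarith [mul_nonneg hlam hx0.le]
        have t1 := abs_add_le ((1/2 - x)*A x + x*B x) (lam/4*x*(1/2-x))
        have t2 := abs_add_le ((1/2-x)*A x) (x*B x)
        calc |(1/2 - x)*A x + x*B x + lam/4*x*(1/2-x)|
            ≤ |(1/2 - x)*A x| + |x*B x| + |lam/4*x*(1/2-x)| := by linarith
          _ ≤ (MA + MB + lam)*x := by nlinarith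
      · have hcont : Continuous (fun x:ℝ => (MA + MB + lam)*x) := continuous_const.mul continuous_id
        have := (hcont.tendsto 0).mono_left (nhdsWithin_le_nhds (s := Ioi (0:ℝ)))
        simpa using this
    have h2 := h1.add htend0
    norm_num at h2
    apply h2.congr
    intro x
    ring

  -- B bound near 1/2
  obtain ⟨Mphi, hMphi_def⟩ : ∃ m:ℝ, m = D^2/8 * δ₀ ^ (-(1/2):ℝ) + MB' := ⟨_, rfl⟩
  have hMphi0 : 0 ≤ Mphi := by rw [hMphi_def]; positivity
  have hB12 : ∀ x ∈ Ico δ₀ (1/2:ℝ), |B x| ≤ Mphi * (1/2 - x) := by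
    intro x hx
    have hx0 : 0 < x := lt_of_lt_of_le hδ₀pos hx.1
    have h1 := hBbd' x ⟨hx0, hx.2.le⟩
    have h2 : (∫ s in x..(1/2:ℝ), (D^2/8 * s ^ (-(1/2):ℝ) + MB')) ≤ ∫ _s in x..(1/2:ℝ), Mphi := by
      apply integral_mono_on hx.2.le (hφ2ii x (1/2)) intervalIntegrable_const
      intro s hs
      have hs0 : 0 < s := lt_of_lt_of_le hx0 hs.1
      have h3 : s ^ (-(1/2):ℝ) ≤ δ₀ ^ (-(1/2):ℝ) :=
        Real.rpow_le_rpow_of_nonpos hδ₀pos (le_trans hx.1 hs.1) (by norm_num)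
      rw [hMphi_def]
      nlinarith [sq_nonneg D]
    rw [intervalIntegral.integral_const, smul_eq_mul] at h2
    calc |B x| ≤ _ := h1
      _ ≤ (1/2 - x)*Mphi := h2
      _ = Mphi*(1/2 - x) := mul_comm _ _
  have hu12 : Tendsto u (𝓝[<] (1/2:ℝ)) (𝓝 0) := by
    have hcw : ContinuousWithinAt u (Icc δ₀ (1/2:ℝ)) (1/2) :=
      ((hu δ₀ (1/2) hδ₀pos le_rfl).continuousOn).continuousWithinAt ⟨hδ₀h.le, le_refl _⟩
    have h2 : Tendsto u (𝓝[Ioo δ₀ (1/2:ℝ)] (1/2:ℝ)) (𝓝 (u (1/2))) :=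
      hcw.tendsto.mono_left (nhdsWithin_mono _ Ioo_subset_Icc_self)
    rw [hbc1] at h2
    rwa [nhdsWithin_Ioo_eq_nhdsLT hδ₀h] at h2
  have hFhalf : Tendsto Ff (𝓝[<] (1/2:ℝ)) (𝓝 0) := by
    have h1 : Tendsto (fun x => Ff x - u x) (𝓝[<] (1/2:ℝ)) (𝓝 0) := by
      apply squeeze_zero_norm' (a := fun x => (MA/2 + Mphi + lam)*(1/2 - x))
      · filter_upwards [Ioo_mem_nhdsLT_of_mem
          (⟨hδ₀h, le_refl _⟩ : (1/2:ℝ) ∈ Ioc δ₀ (1/2:ℝ))] with x hx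
        have hx0 : 0 < x := lt_trans hδ₀pos hx.1
        have hx2 : x < 1/2 := hx.2
        have h12 : (0:ℝ) ≤ 1/2 - x := by linarith
        have hA1 := hAbd x ⟨hx0, hx2.le⟩
        have hB1 := hB12 x ⟨hx.1.le, hx2⟩
        show |Ff x - u x| ≤ _
        have he : Ff x - u x = (1/2 - x)*A x + x*B x + lam/4*x*(1/2-x) := by
          rw [hFf_def]; simp only []; ring
        rw [he]
        have e1 : |(1/2 - x)*A x| ≤ MA/2*(1/2 - x) := by
          rw [abs_mul, abs_of_nonneg h12]
          have hAh : |A x| ≤ MA/2 := le_trans hA1 (by nlinarith [hMA0])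
          calc (1/2-x)*|A x| ≤ (1/2-x)*(MA/2) := mul_le_mul_of_nonneg_left hAh h12
            _ = MA/2*(1/2-x) := mul_comm _ _
        have e2 : |x*B x| ≤ Mphi*(1/2-x) := by
          rw [abs_mul, abs_of_nonneg hx0.le]
          have hMB1 : 0 ≤ Mphi*(1/2-x) := mul_nonneg hMphi0 h12
          calc x*|B x| ≤ x*(Mphi*(1/2-x)) := mul_le_mul_of_nonneg_left hB1 hx0.le
            _ ≤ 1*(Mphi*(1/2-x)) := mul_le_mul_of_nonneg_right (by linarith) hMB1
            _ = Mphi*(1/2-x) := one_mul _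
        have e3 : |lam/4*x*(1/2-x)| ≤ lam*(1/2-x) := by
          have q0 : (0:ℝ) ≤ lam/4*x := mul_nonneg (by linarith) hx0.le
          rw [abs_of_nonneg (mul_nonneg q0 h12)]
          have hq1 : lam/4*x ≤ lam := by nlinarith
          exact mul_le_mul_of_nonneg_right hq1 h12
        have t1 := abs_add_le ((1/2 - x)*A x + x*B x) (lam/4*x*(1/2-x))
        have t2 := abs_add_le ((1/2-x)*A x) (x*B x)
        calc |(1/2 - x)*A x + x*B x + lam/4*x*(1/2-x)|
            ≤ |(1/2 - x)*A x| + |x*B x| + |lam/4*x*(1/2-x)| := by linarith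
          _ ≤ (MA/2 + Mphi + lam)*(1/2 - x) := by linarith
      · have hcont : Continuous (fun x:ℝ => (MA/2 + Mphi + lam)*(1/2 - x)) := by fun_prop
        have := (hcont.tendsto (1/2:ℝ)).mono_left (nhdsWithin_le_nhds (s := Iio (1/2:ℝ)))
        norm_num at this
        exact this
    have h2 := h1.add hu12
    norm_num at h2
    apply h2.congr
    intro x
    ring
  have hIooMem0 : Ioo (0:ℝ) (1/2:ℝ) ∈ 𝓝[>] (0:ℝ) :=
    Ioo_mem_nhdsGT_of_mem ⟨le_refl _, by norm_num⟩
  have hIooMem12 : Ioo (0:ℝ) (1/2:ℝ) ∈ 𝓝[<] (1/2:ℝ) :=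
    Ioo_mem_nhdsLT_of_mem ⟨by norm_num, le_refl _⟩
  have haff_cont : Continuous (fun x:ℝ => aa + bb*x) := by fun_prop
  have haa0 : aa = 0 := by
    have h1 : Tendsto Ff (𝓝[>] (0:ℝ)) (𝓝 (aa + bb*0)) := by
      apply Tendsto.congr' ?_
        ((haff_cont.tendsto 0).mono_left (nhdsWithin_le_nhds (s := Ioi (0:ℝ))))
      filter_upwards [hIooMem0] with x hx
      exact (hFaff x hx).symm
    have h2 := tendsto_nhds_unique h1 hF0
    linarith
  have hbb0 : bb = 0 := by
    have h1 : Tendsto Ff (𝓝[<] (1/2:ℝ)) (𝓝 (aa + bb*(1/2))) := by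
      apply Tendsto.congr' ?_
        ((haff_cont.tendsto (1/2:ℝ)).mono_left (nhdsWithin_le_nhds (s := Iio (1/2:ℝ))))
      filter_upwards [hIooMem12] with x hx
      exact (hFaff x hx).symm
    have h2 := tendsto_nhds_unique h1 hFhalf
    rw [haa0] at h2
    linarith
  have hFzero : ∀ x ∈ Ioo (0:ℝ) (1/2:ℝ), Ff x = 0 := by
    intro x hx
    rw [hFaff x hx, haa0, hbb0]; ring
  refine ⟨?_, hgoal2⟩
  intro t ht
  rcases lt_or_eq_of_le ht.2 with h | h
  · have h0 : Ff t = 0 := hFzero t ⟨ht.1, h⟩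
    have h0' : u t + ((1/2 - t) * (∫ s in (0:ℝ)..t, g1 s) + t * (∫ s in t..(1/2:ℝ), g2 s)
        + lam/4*t*(1/2-t)) = 0 := h0
    show u t = -((1/2 - t) * (∫ s in (0:ℝ)..t, g1 s) + t * (∫ s in t..(1/2:ℝ), g2 s)
        + lam / 4 * t * (1/2 - t))
    linarith
  · subst h
    rw [hbc1, intervalIntegral.integral_same]
    norm_num
end

section
/- Let λ ∈ ℝ. Suppose the zero function α₀ ≡ 0 is a lower solution of Problem 3 (i.e. λ ≥ 0) and suppose there exists an upper solution β₀ ∈ C²_loc((0,1/2];ℝ) of Problem 3, that is, β₀''(t) ≥ β₀(t)²/(8t²) + λ/2 for all t ∈ (0,1/2], lim_{t→0⁺} β₀(t)/√t = 0 and β₀(1/2) ≥ β₀'(1/2), which additionally satisfies β₀(t) ≤ 0 for all t ∈ (0,1/2], lim_{t→0⁺} |β₀(t)|/t < +∞ and lim_{t→0⁺} β₀(t) = 0. Then Problem 3 has at least one solution u ∈ C²_loc((0,1/2];ℝ) with β₀(t) ≤ u(t) ≤ 0 for all t ∈ (0,1/2]. -/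
open Real Filter Set Topology intervalIntegral

open MeasureTheory

/-!
Monotone iteration between the upper solution `β` and the lower solution `0`. Let `G D` be the
solution of the linear problem `u'' = D`, `u 0 = 0`, `u (1/2) = u' (1/2)`, and
`f v = v ^ 2 / (8 t ^ 2) + λ / 2`. Since `G` is antitone in `D` (the Green function is nonpositive)
and `f` is antitone on `v ≤ 0`, the map `v ↦ G (f v)` is monotone on the order interval
`β ≤ v ≤ 0`; it maps `0` below `0`, and `β` above `β` by a concavity argument. Its iterates from
`0` therefore decrease to a limit `w` with `β ≤ w ≤ 0`, and `w = G (f w)` by dominated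
convergence, the bound `|β t| ≤ C t` making `f v` uniformly bounded.
-/

lemma C2loc.contDiffOn_Ioo {u : ℝ → ℝ} (hu : C2loc u) : ContDiffOn ℝ 2 u (Ioo 0 (1/2)) :=
  fun x hx => ((hu (x/2) ((x + 1/2)/2) (by linarith [hx.1]) (by linarith [hx.2])).contDiffAt
    (Icc_mem_nhds (by linarith [hx.1]) (by linarith [hx.2]))).contDiffWithinAt

lemma C2loc.differentiableOn {u : ℝ → ℝ} (hu : C2loc u) : DifferentiableOn ℝ u (Ioo 0 (1/2)) :=
  hu.contDiffOn_Ioo.differentiableOn (by norm_num)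

lemma C2loc.differentiableOn_deriv {u : ℝ → ℝ} (hu : C2loc u) :
    DifferentiableOn ℝ (deriv u) (Ioo 0 (1/2)) :=
  (hu.contDiffOn_Ioo.deriv_of_isOpen isOpen_Ioo (m := 1) (by norm_num)).differentiableOn
    (by norm_num)

lemma C2loc.continuousOn {u : ℝ → ℝ} (hu : C2loc u) : ContinuousOn u (Ioc 0 (1/2)) :=
  fun x hx => ((hu (x/2) (1/2) (half_pos hx.1) le_rfl).continuousOn.continuousWithinAt
    ⟨by linarith [hx.1], hx.2⟩).mono_of_mem_nhdsWithin
      (mem_nhdsWithin.2 ⟨Ioi (x/2), isOpen_Ioi, half_lt_self hx.1, fun _ hs => ⟨hs.1.le, hs.2.2⟩⟩)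

lemma C2loc.of_contDiffOn {u : ℝ → ℝ} (hu : ContDiffOn ℝ 2 u (Ioo 0 1)) : C2loc u :=
  fun _ _ ha hb => hu.mono fun _ hx => ⟨ha.trans_le hx.1, hx.2.trans_lt (by linarith)⟩

lemma ConcaveOn.nonneg_of_tendsto_nhdsGT_zero {f : ℝ → ℝ} {b e : ℝ} (hb : b < 1)
    (hf : ConcaveOn ℝ (Ioc 0 b) f) (h₀ : Tendsto f (𝓝[>] 0) (𝓝 0))
    (he : HasDerivWithinAt f e (Iio b) b) (hfb : f b ≤ e) {t : ℝ} (ht : t ∈ Ioc 0 b) :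
    0 ≤ f t := by
  -- Slopes of secants from `0⁺` give `e ≤ f b / b ≤ f t / t`, and `f b ≤ e` with `b < 1`
  -- forces `f b ≥ 0`.
  have hb₀ : 0 < b := ht.1.trans_le ht.2
  have hslope : ∀ x ≠ 0, Tendsto (fun s => slope f s x) (𝓝[>] 0) (𝓝 (f x / x)) := by
    intro x hx
    have : Tendsto (fun s => (x - s)⁻¹ * (f x - f s)) (𝓝[>] 0) (𝓝 ((x - 0)⁻¹ * (f x - 0))) :=
      ((tendsto_const_nhds.sub (tendsto_nhdsWithin_of_tendsto_nhds tendsto_id)).inv₀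
        (by simpa using hx)).mul (tendsto_const_nhds.sub h₀)
    simpa [slope_def_field, div_eq_inv_mul] using this
  have hnear : ∀ᶠ s in 𝓝[>] (0:ℝ), s ∈ Ioo 0 t := Ioo_mem_nhdsGT ht.1
  have heb : e ≤ f b / b := ge_of_tendsto (hslope b hb₀.ne') (hnear.mono fun s hs =>
    hf.le_slope_of_hasDerivWithinAt_Iio ⟨hs.1, (hs.2.trans_le ht.2).le⟩ ⟨hb₀, le_rfl⟩
      (hs.2.trans_le ht.2) he)
  have hbt : f b / b ≤ f t / t := le_of_tendsto_of_tendsto (hslope b hb₀.ne') (hslope t ht.1.ne')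
    (hnear.mono fun s hs => hf.slope_anti ⟨hs.1, (hs.2.trans_le ht.2).le⟩
      ⟨ht, hs.2.ne'⟩ ⟨⟨hb₀, le_rfl⟩, (hs.2.trans_le ht.2).ne'⟩ ht.2)
  have hfb₀ : 0 ≤ f b := by
    have := hfb.trans heb
    rw [le_div_iff₀ hb₀] at this
    nlinarith
  have := mul_nonneg ((div_nonneg hfb₀ hb₀.le).trans hbt) ht.1.le
  rwa [div_mul_cancel₀ _ ht.1.ne'] at this

lemma exists_abs_le_mul_of_tendsto_abs_div {f : ℝ → ℝ} {b L : ℝ} (hf : ContinuousOn f (Ioc 0 b))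
    (hL : Tendsto (fun t => |f t| / t) (𝓝[>] 0) (𝓝 L)) : ∃ C, ∀ t ∈ Ioc 0 b, |f t| ≤ C * t := by
  obtain ⟨δ, hδ, hsmall⟩ :=
    mem_nhdsGT_iff_exists_Ioo_subset.1 (hL.eventually (gt_mem_nhds (lt_add_one L)))
  have hδ : 0 < δ := hδ
  obtain ⟨B, hB⟩ := isCompact_Icc.bddAbove_image <|
    (hf.abs.div continuousOn_id fun t ht => ht.1.ne').mono
      (fun t ht => ⟨by linarith [ht.1], ht.2⟩ : Icc (δ/2) b ⊆ Ioc 0 b)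
  refine ⟨max (L + 1) B, fun t ht => (div_le_iff₀ ht.1).1 ?_⟩
  rcases lt_or_ge t (δ/2) with h | h
  · exact (hsmall ⟨ht.1, by linarith⟩ : |f t| / t < L + 1).le.trans (le_max_left _ _)
  · exact (hB ⟨t, ⟨h, ht.2⟩, rfl⟩).trans (le_max_right _ _)

namespace SingularBVP

noncomputable section

def greenSlope (D : ℝ → ℝ) : ℝ :=
  2 * ((∫ r in (0:ℝ)..1/2, ∫ s in (0:ℝ)..r, D s) - ∫ s in (0:ℝ)..1/2, D s)

/-- The solution of `u'' = D` with `u 0 = 0` and `u (1/2) = u' (1/2)`; the latter condition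
fixes the slope `u' 0 = greenSlope D`. -/
def green (D : ℝ → ℝ) (t : ℝ) : ℝ :=
  greenSlope D * t + ∫ r in (0:ℝ)..t, ∫ s in (0:ℝ)..r, D s

section Green

variable {D D₁ D₂ : ℝ → ℝ}

lemma hasDerivAt_green (hD : Integrable D) (t : ℝ) :
    HasDerivAt (green D) (greenSlope D + ∫ s in (0:ℝ)..t, D s) t := by
  have h := ((hasDerivAt_id' t).const_mul (greenSlope D)).add
    ((hD.continuous_primitive 0).integral_hasStrictDerivAt 0 t).hasDerivAt
  rwa [mul_one] at h

lemma deriv_green (hD : Integrable D) :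
    deriv (green D) = fun t => greenSlope D + ∫ s in (0:ℝ)..t, D s :=
  funext fun t => (hasDerivAt_green hD t).deriv

lemma continuous_green (hD : Integrable D) : Continuous (green D) :=
  continuous_iff_continuousAt.2 fun t => (hasDerivAt_green hD t).continuousAt

lemma continuous_deriv_green (hD : Integrable D) : Continuous (deriv (green D)) := by
  rw [deriv_green hD]
  exact continuous_const.add (hD.continuous_primitive 0)

lemma tendsto_sqrt_mul_deriv_green (hD : Integrable D) :
    Tendsto (fun t => √t * deriv (green D) t) (𝓝[>] 0) (𝓝 0) := by
  simpa using ((continuous_sqrt.tendsto 0).mul ((continuous_deriv_green hD).tendsto 0)).mono_left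
    nhdsWithin_le_nhds

lemma hasDerivAt_deriv_green (hD : Integrable D) {t : ℝ} (hc : ContinuousAt D t) :
    HasDerivAt (deriv (green D)) (D t) t := by
  rw [deriv_green hD]
  exact (intervalIntegral.integral_hasDerivAt_right hD.intervalIntegrable
    hD.aestronglyMeasurable.stronglyMeasurableAtFilter hc).const_add _

lemma contDiffOn_green (hD : Integrable D) {U : Set ℝ} (hU : IsOpen U) (hc : ContinuousOn D U) :
    ContDiffOn ℝ 2 (green D) U := by
  have hD' : ∀ t ∈ U, HasDerivAt (deriv (green D)) (D t) t :=
    fun t ht => hasDerivAt_deriv_green hD (hc.continuousAt (hU.mem_nhds ht))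
  rw [show (2 : WithTop ℕ∞) = 1 + 1 from rfl, contDiffOn_succ_iff_deriv_of_isOpen hU,
    show (1 : WithTop ℕ∞) = 0 + 1 from rfl, contDiffOn_succ_iff_deriv_of_isOpen hU]
  refine ⟨fun t _ => (hasDerivAt_green hD t).differentiableAt.differentiableWithinAt,
    by simp, fun t ht => (hD' t ht).differentiableAt.differentiableWithinAt, by simp, ?_⟩
  rw [contDiffOn_zero]
  exact hc.congr fun t ht => (hD' t ht).deriv

lemma green_zero : green D 0 = 0 := by simp [green]

lemma green_half_eq_deriv (hD : Integrable D) : green D (1/2) = deriv (green D) (1/2) := by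
  rw [deriv_green hD, green, greenSlope]
  ring

lemma green_nonpos (hD : Integrable D) (hD₀ : 0 ≤ D) {t : ℝ} (ht : t ∈ Icc (0:ℝ) (1/2)) :
    green D t ≤ 0 := by
  set P : ℝ → ℝ := fun r => ∫ s in (0:ℝ)..r, D s
  have hP : Continuous P := hD.continuous_primitive 0
  have hPle : ∀ r ∈ Icc (0:ℝ) (1/2), P r ≤ P (1/2) := fun r hr => by
    have hdiff : P (1/2) - P r = ∫ s in r..1/2, D s :=
      intervalIntegral.integral_interval_sub_left hD.intervalIntegrable hD.intervalIntegrable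
    linarith [intervalIntegral.integral_nonneg (μ := volume) hr.2 fun s _ => hD₀ s]
  have hI : ∀ b ∈ Icc (0:ℝ) (1/2), ∫ r in (0:ℝ)..b, P r ≤ b * P (1/2) := fun b hb => by
    have := intervalIntegral.integral_mono_on hb.1 (hP.intervalIntegrable (μ := volume) 0 b)
      intervalIntegrable_const fun r hr => hPle r ⟨hr.1, hr.2.trans hb.2⟩
    rwa [intervalIntegral.integral_const, smul_eq_mul, sub_zero] at this
  have hhalf := mul_le_mul_of_nonneg_left (hI (1/2) ⟨by norm_num, le_rfl⟩) ht.1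
  simp only [green, greenSlope]
  linarith [hI t ht]

lemma green_sub (hD₁ : Integrable D₁) (hD₂ : Integrable D₂) :
    green (D₁ - D₂) = green D₁ - green D₂ := by
  have hP : ∀ r, ∫ s in (0:ℝ)..r, (D₁ - D₂) s
      = (∫ s in (0:ℝ)..r, D₁ s) - ∫ s in (0:ℝ)..r, D₂ s := fun r =>
    intervalIntegral.integral_sub hD₁.intervalIntegrable hD₂.intervalIntegrable
  have hI : ∀ t, ∫ r in (0:ℝ)..t, ∫ s in (0:ℝ)..r, (D₁ - D₂) s
      = (∫ r in (0:ℝ)..t, ∫ s in (0:ℝ)..r, D₁ s) - ∫ r in (0:ℝ)..t, ∫ s in (0:ℝ)..r, D₂ s :=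
    fun t => by
      simp_rw [hP]
      exact intervalIntegral.integral_sub ((hD₁.continuous_primitive 0).intervalIntegrable _ _)
        ((hD₂.continuous_primitive 0).intervalIntegrable _ _)
  funext t
  show green (D₁ - D₂) t = green D₁ t - green D₂ t
  simp only [green, greenSlope, hI]
  rw [hP]
  ring

lemma green_anti (hD₁ : Integrable D₁) (hD₂ : Integrable D₂) (hle : D₁ ≤ D₂) {t : ℝ}
    (ht : t ∈ Icc (0:ℝ) (1/2)) : green D₂ t ≤ green D₁ t := by
  have := green_nonpos (hD₂.sub hD₁) (sub_nonneg.2 hle) ht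
  rw [green_sub hD₂ hD₁, Pi.sub_apply] at this
  linarith

lemma tendsto_green {ι : Type*} {l : Filter ι} [l.IsCountablyGenerated] {D : ι → ℝ → ℝ}
    {D' : ℝ → ℝ} {M : ℝ} (hD : ∀ n, Integrable (D n)) (hM : ∀ n s, |D n s| ≤ M)
    (hlim : ∀ s, Tendsto (fun n => D n s) l (𝓝 (D' s))) (t : ℝ) :
    Tendsto (fun n => green (D n) t) l (𝓝 (green D' t)) := by
  have hP : ∀ r, Tendsto (fun n => ∫ s in (0:ℝ)..r, D n s) l
      (𝓝 (∫ s in (0:ℝ)..r, D' s)) := fun r =>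
    intervalIntegral.tendsto_integral_filter_of_dominated_convergence (fun _ => M)
      (.of_forall fun n => (hD n).aestronglyMeasurable.restrict)
      (.of_forall fun n => .of_forall fun s _ => hM n s)
      intervalIntegrable_const (.of_forall fun s _ => hlim s)
  have hI : ∀ b, Tendsto (fun n => ∫ r in (0:ℝ)..b, ∫ s in (0:ℝ)..r, D n s) l
      (𝓝 (∫ r in (0:ℝ)..b, ∫ s in (0:ℝ)..r, D' s)) := fun b =>
    intervalIntegral.tendsto_integral_filter_of_dominated_convergence (fun r => M * |r|)
      (.of_forall fun n => ((hD n).continuous_primitive 0).aestronglyMeasurable)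
      (.of_forall fun n => .of_forall fun r _ => by
        simpa using intervalIntegral.norm_integral_le_of_norm_le_const
          (a := 0) (b := r) (f := D n) fun s _ => hM n s)
      ((by fun_prop : Continuous fun r : ℝ => M * |r|).intervalIntegrable _ _)
      (.of_forall fun r _ => hP r)
  simp only [green, greenSlope]
  exact ((((hI _).sub (hP _)).const_mul 2).mul_const t).add (hI t)

end Green

lemma concaveOn_green_sub {D β : ℝ → ℝ} (hD : Integrable D) (hDc : ContinuousOn D (Ioo 0 (1/2)))
    (hβ : C2loc β) (hβ'' : ∀ t ∈ Ioo (0:ℝ) (1/2), D t ≤ deriv (deriv β) t) :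
    ConcaveOn ℝ (Ioc 0 (1/2)) fun t => green D t - β t := by
  have hφ' : ∀ x ∈ Ioo (0:ℝ) (1/2),
      HasDerivAt (fun t => green D t - β t) (deriv (green D) x - deriv β x) x :=
    fun x hx => (hasDerivAt_green hD x).differentiableAt.hasDerivAt.sub
      (hβ.differentiableOn.differentiableAt (isOpen_Ioo.mem_nhds hx)).hasDerivAt
  have hφ'' : ∀ x ∈ Ioo (0:ℝ) (1/2),
      HasDerivAt (deriv fun t => green D t - β t) (D x - deriv (deriv β) x) x :=
    fun x hx => ((hasDerivAt_deriv_green hD (hDc.continuousAt (isOpen_Ioo.mem_nhds hx))).sub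
      (hβ.differentiableOn_deriv.differentiableAt (isOpen_Ioo.mem_nhds hx)).hasDerivAt
      ).congr_of_eventuallyEq
      (eventually_of_mem (isOpen_Ioo.mem_nhds hx) fun y hy => (hφ' y hy).deriv)
  refine concaveOn_of_deriv2_nonpos (convex_Ioc 0 (1/2))
    ((continuous_green hD).continuousOn.sub hβ.continuousOn) ?_ ?_ ?_ <;> rw [interior_Ioc]
  · exact fun x hx => (hφ' x hx).differentiableAt.differentiableWithinAt
  · exact fun x hx => (hφ'' x hx).differentiableAt.differentiableWithinAt
  · intro x hx
    rw [Function.iterate_succ_apply, Function.iterate_one, (hφ'' x hx).deriv]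
    linarith [hβ'' x hx]

/-- Comparison principle: `φ = green D - β` is concave, tends to `0` at `0⁺` and satisfies
`φ (1/2) ≤ φ' (1/2)`, hence is nonnegative. -/
lemma le_green_of_le_deriv_deriv {D β : ℝ → ℝ} (hD : Integrable D)
    (hDc : ContinuousOn D (Ioo 0 (1/2))) (hβ : C2loc β)
    (hβ'' : ∀ t ∈ Ioo (0:ℝ) (1/2), D t ≤ deriv (deriv β) t)
    (hβ' : ContinuousAt (deriv β) (1/2)) (hbc : deriv β (1/2) ≤ β (1/2))
    (hβ₀ : Tendsto β (𝓝[>] 0) (𝓝 0)) {t : ℝ} (ht : t ∈ Ioc (0:ℝ) (1/2)) :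
    β t ≤ green D t := by
  have hβleft : HasDerivWithinAt β (deriv β (1/2)) (Iio (1/2)) (1/2) :=
    (hasDerivWithinAt_Iic_of_tendsto_deriv hβ.differentiableOn
      ((hβ.continuousOn (1/2) ⟨by norm_num, le_rfl⟩).mono Ioo_subset_Ioc_self)
      (Ioo_mem_nhdsLT (by norm_num)) (hβ'.tendsto.mono_left nhdsWithin_le_nhds)).mono
      Iio_subset_Iic_self
  have hφ₀ : Tendsto (fun t => green D t - β t) (𝓝[>] 0) (𝓝 0) := by
    simpa using (((continuous_green hD).tendsto' 0 0 green_zero).mono_left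
      nhdsWithin_le_nhds).sub hβ₀
  have hbc' : green D (1/2) - β (1/2)
      ≤ (greenSlope D + ∫ s in (0:ℝ)..1/2, D s) - deriv β (1/2) := by
    rw [green_half_eq_deriv hD, deriv_green hD]
    linarith
  have := (concaveOn_green_sub hD hDc hβ hβ'').nonneg_of_tendsto_nhdsGT_zero (by norm_num) hφ₀
    ((hasDerivAt_green hD (1/2)).hasDerivWithinAt.sub hβleft) hbc' ht
  linarith

/-- Frozen at its value at `1/2` for `s > 1/2`, so that it stays continuous at `1/2`, where
`deriv` is two-sided. -/
def frozenRhs (lam : ℝ) (v : ℝ → ℝ) (s : ℝ) : ℝ :=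
  v (min s (1/2)) ^ 2 / (8 * min s (1/2) ^ 2) + lam / 2

/-- Cut off outside `(0, 1]` to make it integrable. -/
def rhs (lam : ℝ) (v : ℝ → ℝ) : ℝ → ℝ := (Ioc 0 1).indicator (frozenRhs lam v)

def InOrderInterval (β v : ℝ → ℝ) : Prop :=
  ∀ t ∈ Ioc (0:ℝ) (1/2), β t ≤ v t ∧ v t ≤ 0

section Rhs

variable {lam C : ℝ} {β v v₁ v₂ : ℝ → ℝ}

lemma min_half_mem {s : ℝ} (hs : 0 < s) : min s (1/2) ∈ Ioc (0:ℝ) (1/2) :=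
  ⟨lt_min hs (by norm_num), min_le_right _ _⟩

lemma rhs_of_mem {t : ℝ} (ht : t ∈ Ioc (0:ℝ) (1/2)) :
    rhs lam v t = v t ^ 2 / (8 * t ^ 2) + lam / 2 := by
  rw [rhs, indicator_of_mem (Ioc_subset_Ioc_right (by norm_num) ht), frozenRhs, min_eq_left ht.2]

lemma rhs_congr (h : EqOn v₁ v₂ (Ioc 0 (1/2))) : rhs lam v₁ = rhs lam v₂ := by
  funext s
  by_cases hs : s ∈ Ioc (0:ℝ) 1
  · simp only [rhs, frozenRhs, indicator_of_mem hs, h (min_half_mem hs.1)]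
  · simp only [rhs, indicator_of_notMem hs]

lemma rhs_nonneg (hlam : 0 ≤ lam) : 0 ≤ rhs lam v :=
  fun _ => indicator_nonneg (fun _ _ => by unfold frozenRhs; positivity) _

lemma rhs_anti (h : ∀ t ∈ Ioc (0:ℝ) (1/2), v₁ t ≤ v₂ t ∧ v₂ t ≤ 0) : rhs lam v₂ ≤ rhs lam v₁ := by
  intro s
  by_cases hs : s ∈ Ioc (0:ℝ) 1
  · simp only [rhs, frozenRhs, indicator_of_mem hs]
    have := h _ (min_half_mem hs.1)
    gcongr ?_ / _ + _
    nlinarith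
  · simp only [rhs, indicator_of_notMem hs, le_refl]

lemma abs_rhs_le (hlam : 0 ≤ lam) (hv : ∀ t ∈ Ioc (0:ℝ) (1/2), |v t| ≤ C * t) (s : ℝ) :
    |rhs lam v s| ≤ C ^ 2 / 8 + lam / 2 := by
  rw [abs_of_nonneg (rhs_nonneg hlam s)]
  by_cases hs : s ∈ Ioc (0:ℝ) 1
  · simp only [rhs, frozenRhs, indicator_of_mem hs]
    set r := min s (1/2)
    have hr := min_half_mem hs.1
    have hsq : v r ^ 2 ≤ (C * r) ^ 2 := by
      rw [← sq_abs]
      exact pow_le_pow_left₀ (abs_nonneg _) (hv r hr) 2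
    have : v r ^ 2 / (8 * r ^ 2) ≤ C ^ 2 / 8 := by
      rw [div_le_iff₀ (by have := hr.1; positivity)]
      linarith
    linarith
  · simp only [rhs, indicator_of_notMem hs]
    positivity

lemma continuousOn_frozenRhs (hv : ContinuousOn v (Ioc 0 (1/2))) :
    ContinuousOn (frozenRhs lam v) (Ioi 0) := by
  have hm : ContinuousOn (fun s : ℝ => min s (1/2)) (Ioi 0) := by fun_prop
  refine (((hv.comp hm fun s hs => min_half_mem hs).pow 2).div (by fun_prop) fun s hs => ?_).add
    continuousOn_const
  have := (min_half_mem hs).1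
  positivity

lemma aestronglyMeasurable_rhs (hv : ContinuousOn v (Ioc 0 (1/2))) :
    AEStronglyMeasurable (rhs lam v) :=
  (aestronglyMeasurable_indicator_iff measurableSet_Ioc).2
    (((continuousOn_frozenRhs hv).mono Ioc_subset_Ioi_self).aestronglyMeasurable measurableSet_Ioc)

lemma continuousAt_rhs (hv : ContinuousOn v (Ioc 0 (1/2))) {s : ℝ} (hs : s ∈ Ioo (0:ℝ) 1) :
    ContinuousAt (rhs lam v) s :=
  ((continuousOn_frozenRhs hv).continuousAt (Ioi_mem_nhds hs.1)).congr
    (eventually_of_mem (Ioo_mem_nhds hs.1 hs.2) fun _ hx => by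
      rw [rhs, indicator_of_mem (Ioo_subset_Ioc_self hx)])

lemma InOrderInterval.abs_le (hβC : ∀ t ∈ Ioc (0:ℝ) (1/2), |β t| ≤ C * t)
    (hv : InOrderInterval β v) : ∀ t ∈ Ioc (0:ℝ) (1/2), |v t| ≤ C * t := fun t ht => by
  rw [abs_of_nonpos (hv t ht).2]
  linarith [neg_le_abs (β t), hβC t ht, (hv t ht).1]

lemma integrable_rhs (hlam : 0 ≤ lam) (hv : ∀ t ∈ Ioc (0:ℝ) (1/2), |v t| ≤ C * t)
    (hm : AEStronglyMeasurable (rhs lam v)) :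
    Integrable (rhs lam v) := by
  refine ((integrableOn_const (s := Ioc (0:ℝ) 1) (C := C ^ 2 / 8 + lam / 2)
    measure_Ioc_lt_top.ne).integrable_indicator measurableSet_Ioc).mono' hm (.of_forall fun s => ?_)
  by_cases hs : s ∈ Ioc (0:ℝ) 1
  · rw [indicator_of_mem hs]
    exact abs_rhs_le hlam hv s
  · rw [indicator_of_notMem hs, rhs, indicator_of_notMem hs, norm_zero]

end Rhs

def picardMap (lam : ℝ) (v : ℝ → ℝ) : ℝ → ℝ := green (rhs lam v)

lemma picardMap_le_picardMap {lam : ℝ} {v₁ v₂ : ℝ → ℝ} (hint₁ : Integrable (rhs lam v₁))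
    (hint₂ : Integrable (rhs lam v₂)) (hle : ∀ t ∈ Ioc (0:ℝ) (1/2), v₁ t ≤ v₂ t ∧ v₂ t ≤ 0)
    {t : ℝ} (ht : t ∈ Ioc (0:ℝ) (1/2)) : picardMap lam v₁ t ≤ picardMap lam v₂ t :=
  green_anti hint₂ hint₁ (rhs_anti hle) ⟨ht.1.le, ht.2⟩

section Iteration

variable {lam C : ℝ} {β : ℝ → ℝ} (hlam : 0 ≤ lam) (hβC : ∀ t ∈ Ioc (0:ℝ) (1/2), |β t| ≤ C * t)
  (hβint : Integrable (rhs lam β)) (hβT : ∀ t ∈ Ioc (0:ℝ) (1/2), β t ≤ picardMap lam β t)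

include hlam hβint hβT in
lemma InOrderInterval.picardMap {v : ℝ → ℝ} (hv : InOrderInterval β v)
    (hint : Integrable (rhs lam v)) : InOrderInterval β (picardMap lam v) := fun t ht =>
  ⟨(hβT t ht).trans (picardMap_le_picardMap hβint hint hv ht),
    green_nonpos hint (rhs_nonneg hlam) ⟨ht.1.le, ht.2⟩⟩

include hlam hβC hβint hβT in
lemma iterate_picardMap (hβ₀ : ∀ t ∈ Ioc (0:ℝ) (1/2), β t ≤ 0) (n : ℕ) :
    Continuous ((picardMap lam)^[n] 0) ∧ InOrderInterval β ((picardMap lam)^[n] 0) ∧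
      ∀ t ∈ Ioc (0:ℝ) (1/2), (picardMap lam)^[n + 1] 0 t ≤ (picardMap lam)^[n] 0 t := by
  have hint : ∀ {v}, Continuous v → InOrderInterval β v → Integrable (rhs lam v) := fun hc hv =>
    integrable_rhs hlam (hv.abs_le hβC) (aestronglyMeasurable_rhs hc.continuousOn)
  induction n with
  | zero =>
    have h0 : InOrderInterval β 0 := fun t ht => ⟨hβ₀ t ht, le_rfl⟩
    exact ⟨continuous_const, h0, fun t ht =>
      green_nonpos (hint continuous_const h0) (rhs_nonneg hlam) ⟨ht.1.le, ht.2⟩⟩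
  | succ n ih =>
    obtain ⟨hc, hv, hdec⟩ := ih
    have hsucc : (picardMap lam)^[n + 1] 0 = picardMap lam ((picardMap lam)^[n] 0) :=
      Function.iterate_succ_apply' ..
    have hc' : Continuous ((picardMap lam)^[n + 1] 0) := hsucc ▸ continuous_green (hint hc hv)
    have hv' : InOrderInterval β ((picardMap lam)^[n + 1] 0) :=
      hsucc ▸ hv.picardMap hlam hβint hβT (hint hc hv)
    refine ⟨hc', hv', fun t ht => ?_⟩
    have := picardMap_le_picardMap (hint hc' hv') (hint hc hv)
      (fun s hs => ⟨hdec s hs, (hv s hs).2⟩) ht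
    rwa [← hsucc, ← Function.iterate_succ_apply' (picardMap lam) (n + 1)] at this

include hlam hβC hβint hβT in
lemma exists_fixedPoint_picardMap (hβ₀ : ∀ t ∈ Ioc (0:ℝ) (1/2), β t ≤ 0) :
    ∃ w, InOrderInterval β w ∧ Integrable (rhs lam w) ∧
      ∀ t ∈ Ioc (0:ℝ) (1/2), picardMap lam w t = w t := by
  set u : ℕ → ℝ → ℝ := fun n => (picardMap lam)^[n] 0
  have hu := iterate_picardMap hlam hβC hβint hβT hβ₀
  have hbdd : ∀ t ∈ Ioc (0:ℝ) (1/2), BddBelow (range fun n => u n t) :=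
    fun t ht => ⟨β t, by rintro _ ⟨n, rfl⟩; exact ((hu n).2.1 t ht).1⟩
  set w : ℝ → ℝ := fun t => ⨅ n, u n t
  have hlim : ∀ t ∈ Ioc (0:ℝ) (1/2), Tendsto (fun n => u n t) atTop (𝓝 (w t)) :=
    fun t ht => tendsto_atTop_ciInf (antitone_nat_of_succ_le fun n => (hu n).2.2 t ht) (hbdd t ht)
  have hw : InOrderInterval β w := fun t ht =>
    ⟨le_ciInf fun n => ((hu n).2.1 t ht).1, ciInf_le (hbdd t ht) 0⟩
  have hint : ∀ n, Integrable (rhs lam (u n)) := fun n =>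
    integrable_rhs hlam ((hu n).2.1.abs_le hβC) (aestronglyMeasurable_rhs (hu n).1.continuousOn)
  have hrhs : ∀ s, Tendsto (fun n => rhs lam (u n) s) atTop (𝓝 (rhs lam w s)) := by
    intro s
    by_cases hs : s ∈ Ioc (0:ℝ) 1
    · simp only [rhs, frozenRhs, indicator_of_mem hs]
      exact (((hlim _ (min_half_mem hs.1)).pow 2).div_const _).add_const _
    · simp only [rhs, indicator_of_notMem hs, tendsto_const_nhds]
  have hwint : Integrable (rhs lam w) := integrable_rhs hlam (hw.abs_le hβC)
    (aestronglyMeasurable_of_tendsto_ae atTop (fun n => (hint n).aestronglyMeasurable)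
      (ae_of_all _ hrhs))
  refine ⟨w, hw, hwint, fun t ht => tendsto_nhds_unique (tendsto_green hint
    (fun n => abs_rhs_le hlam ((hu n).2.1.abs_le hβC)) hrhs t) ?_⟩
  have h := (hlim t ht).comp (tendsto_add_atTop_nat 1)
  simp only [Function.comp_def, u, Function.iterate_succ_apply'] at h
  exact h

end Iteration

end

end SingularBVP

open SingularBVP

theorem stmt15_general (lam : ℝ) (hlam : 0 ≤ lam) (β : ℝ → ℝ) (hβ : C2loc β)
    (hupper : ∀ t ∈ Set.Ioc (0:ℝ) (1/2),
      deriv (deriv β) t ≥ β t ^ 2 / (8 * t ^ 2) + lam / 2)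
    (hβbc : β (1/2) ≥ deriv β (1/2))
    (hβneg : ∀ t ∈ Set.Ioc (0:ℝ) (1/2), β t ≤ 0)
    (hβfin : ∃ L : ℝ, Tendsto (fun t => |β t| / t) (𝓝[>] (0:ℝ)) (𝓝 L))
    (hβlim : Tendsto β (𝓝[>] (0:ℝ)) (𝓝 0)) :
    ∃ u : ℝ → ℝ, C2loc u ∧
      (∀ t ∈ Set.Ioc (0:ℝ) (1/2),
        deriv (deriv u) t = u t ^ 2 / (8 * t ^ 2) + lam / 2) ∧
      Tendsto (fun t => Real.sqrt t * deriv u t) (𝓝[>] (0:ℝ)) (𝓝 0) ∧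
      u (1/2) = deriv u (1/2) ∧
      (∀ t ∈ Set.Ioc (0:ℝ) (1/2), β t ≤ u t ∧ u t ≤ 0) := by
  rcases hlam.eq_or_lt with rfl | hlam
  · exact ⟨0, fun _ _ _ _ => contDiffOn_const, fun t _ => by simp, by simp, by simp,
      fun t ht => ⟨hβneg t ht, le_rfl⟩⟩
  obtain ⟨C, hβC⟩ := exists_abs_le_mul_of_tendsto_abs_div hβ.continuousOn hβfin.choose_spec
  have hβint : Integrable (rhs lam β) :=
    integrable_rhs hlam.le hβC (aestronglyMeasurable_rhs hβ.continuousOn)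
  -- `β'' (1/2) ≥ λ / 2 > 0` is not the junk value `0`, so `deriv β` is differentiable at `1/2`.
  have hβ' : ContinuousAt (deriv β) (1/2) := (differentiableAt_of_deriv_ne_zero
    (by linarith [hupper (1/2) ⟨by norm_num, le_rfl⟩, sq_nonneg (β (1/2))])).continuousAt
  have hβT : ∀ t ∈ Ioc (0:ℝ) (1/2), β t ≤ picardMap lam β t := fun t ht =>
    le_green_of_le_deriv_deriv hβint
      (fun s hs => (continuousAt_rhs hβ.continuousOn
        ⟨hs.1, hs.2.trans (by norm_num)⟩).continuousWithinAt) hβ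
      (fun s hs => (rhs_of_mem (Ioo_subset_Ioc_self hs)).trans_le
        (hupper s (Ioo_subset_Ioc_self hs))) hβ' hβbc hβlim ht
  obtain ⟨w, hwβ, hwint, hfix⟩ := exists_fixedPoint_picardMap hlam.le hβC hβint hβT hβneg
  have hrhs : rhs lam (picardMap lam w) = rhs lam w := rhs_congr hfix
  have hcont : ∀ s ∈ Ioo (0:ℝ) 1, ContinuousAt (rhs lam w) s := fun s hs =>
    hrhs ▸ continuousAt_rhs (continuous_green hwint).continuousOn hs
  refine ⟨picardMap lam w, C2loc.of_contDiffOn (contDiffOn_green hwint isOpen_Ioo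
    fun s hs => (hcont s hs).continuousWithinAt), fun t ht => ?_,
    tendsto_sqrt_mul_deriv_green hwint, green_half_eq_deriv hwint, fun t ht => hfix t ht ▸ hwβ t ht⟩
  have hu'' : deriv (deriv (picardMap lam w)) t = rhs lam w t :=
    (hasDerivAt_deriv_green hwint (hcont t ⟨ht.1, ht.2.trans_lt (by norm_num)⟩)).deriv
  rw [hu'', ← hrhs, rhs_of_mem ht]

theorem stmt15 (lam : ℝ) (hlam : 0 ≤ lam) (β : ℝ → ℝ) (hβ : C2loc β)
    (hupper : ∀ t ∈ Set.Ioc (0:ℝ) (1/2),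
      deriv (deriv β) t ≥ β t ^ 2 / (8 * t ^ 2) + lam / 2)
    (hβ0 : Tendsto (fun t => β t / Real.sqrt t) (𝓝[>] (0:ℝ)) (𝓝 0))
    (hβbc : β (1/2) ≥ deriv β (1/2))
    (hβneg : ∀ t ∈ Set.Ioc (0:ℝ) (1/2), β t ≤ 0)
    (hβfin : ∃ L : ℝ, Tendsto (fun t => |β t| / t) (𝓝[>] (0:ℝ)) (𝓝 L))
    (hβlim : Tendsto β (𝓝[>] (0:ℝ)) (𝓝 0)) :
    ∃ u : ℝ → ℝ, C2loc u ∧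
      (∀ t ∈ Set.Ioc (0:ℝ) (1/2),
        deriv (deriv u) t = u t ^ 2 / (8 * t ^ 2) + lam / 2) ∧
      Tendsto (fun t => Real.sqrt t * deriv u t) (𝓝[>] (0:ℝ)) (𝓝 0) ∧
      u (1/2) = deriv u (1/2) ∧
      (∀ t ∈ Set.Ioc (0:ℝ) (1/2), β t ≤ u t ∧ u t ≤ 0) :=
  stmt15_general lam hlam β hβ hupper hβbc hβneg hβfin hβlim
end

section
/- Let C be a real number with 0 ≤ C ≤ 128/9 and let λ satisfy 0 ≤ λ ≤ 2C. Define β(t) = −C·t·(3/2 − √(2t)) for t ∈ (0,1/2]. Then β ∈ C²_loc((0,1/2];ℝ), β satisfies β''(t) ≥ β(t)²/(8t²) + λ/2 for all t ∈ (0,1/2], β'(1/2) = 0, β(t) ≤ 0 for all t ∈ (0,1/2], lim_{t→0⁺} β(t)/√t = 0, lim_{t→0⁺} |β(t)|/t < +∞, and lim_{t→0⁺} β(t) = 0. In particular, β is an upper solution of Problem 2. -/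
open Real Filter Set Topology intervalIntegral

/-! With `s = √(2t)` one has `β'' = 3C/(2s)` and `β²/(8t²) = C²(3/2 - s)²/8`, so the differential
inequality becomes a polynomial inequality in `s ∈ (0, 1]`. Using `λ ≤ 2C`, it follows from
`3C/2 - Cs - C²s(3/2 - s)²/8 = C(4s - 3)²(3 - 2s)/18 + C(128/9 - C)s(3/2 - s)²/8`,
whose right-hand side is nonnegative for `0 ≤ C ≤ 128/9` and `s ≤ 3/2`. The boundary behaviour is read
off from `β t / √t = -C√t(3/2 - √(2t))` and `|β t| / t = C|3/2 - √(2t)|`. -/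

theorem hasDerivAt_sqrt_two_mul {t : ℝ} (ht : 0 < t) :
    HasDerivAt (fun x : ℝ => √(2 * x)) (1 / √(2 * t)) t := by
  have h := (Real.hasDerivAt_sqrt (by positivity : 2 * t ≠ 0)).comp t
    ((hasDerivAt_id' t).const_mul 2)
  refine h.congr_deriv ?_
  have : 0 < √(2 * t) := Real.sqrt_pos.mpr (by positivity)
  field_simp

noncomputable def upperProfile (C t : ℝ) : ℝ := -C * t * (3/2 - √(2 * t))

namespace upperProfile

variable (C : ℝ) {t : ℝ}

theorem hasDerivAt (ht : 0 < t) :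
    HasDerivAt (upperProfile C) (3 * C / 2 * (√(2 * t) - 1)) t := by
  have h := ((hasDerivAt_id' t).const_mul (-C)).mul
    ((hasDerivAt_sqrt_two_mul ht).const_sub (3/2))
  refine h.congr_deriv ?_
  have hs : √(2 * t) * √(2 * t) = 2 * t := Real.mul_self_sqrt (by positivity)
  have : 0 < √(2 * t) := Real.sqrt_pos.mpr (by positivity)
  field_simp
  linear_combination (-C) * hs

theorem deriv_eq (ht : 0 < t) : deriv (upperProfile C) t = 3 * C / 2 * (√(2 * t) - 1) :=
  (hasDerivAt C ht).deriv

theorem deriv_deriv_eq (ht : 0 < t) :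
    deriv (deriv (upperProfile C)) t = 3 * C / 2 / √(2 * t) := by
  have heq : deriv (upperProfile C) =ᶠ[𝓝 t] fun x => 3 * C / 2 * (√(2 * x) - 1) := by
    filter_upwards [Ioi_mem_nhds ht] with x hx using deriv_eq C hx
  rw [heq.deriv_eq, (((hasDerivAt_sqrt_two_mul ht).sub_const 1).const_mul (3 * C / 2)).deriv]
  ring

theorem contDiffAt {n : WithTop ℕ∞} (ht : 0 < t) : ContDiffAt ℝ n (upperProfile C) t := by
  have hsqrt : ContDiffAt ℝ n (fun x : ℝ => √(2 * x)) t :=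
    (Real.contDiffAt_sqrt (by positivity)).comp t (contDiffAt_const.mul contDiffAt_id)
  exact (contDiffAt_const.mul contDiffAt_id).mul (contDiffAt_const.sub hsqrt)

theorem sq_div_eq (ht : 0 < t) :
    upperProfile C t ^ 2 / (8 * t ^ 2) = C ^ 2 * (3/2 - √(2 * t)) ^ 2 / 8 := by
  unfold upperProfile
  field_simp

theorem nonpos (hC : 0 ≤ C) (ht : t ∈ Ioc (0 : ℝ) (1/2)) : upperProfile C t ≤ 0 := by
  have hs : √(2 * t) ≤ 1 := Real.sqrt_le_one.mpr (by linarith [ht.2])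
  have : 0 ≤ C * t * (3/2 - √(2 * t)) := mul_nonneg (mul_nonneg hC ht.1.le) (by linarith)
  unfold upperProfile
  linarith

theorem tendsto_div_sqrt : Tendsto (fun t => upperProfile C t / √t) (𝓝[>] 0) (𝓝 0) := by
  have hlim : Tendsto (fun t : ℝ => -C * √t * (3/2 - √(2 * t))) (𝓝[>] 0) (𝓝 0) := by
    have h : Continuous fun t : ℝ => -C * √t * (3/2 - √(2 * t)) := by fun_prop
    simpa using (h.tendsto 0).mono_left nhdsWithin_le_nhds
  refine hlim.congr' ?_
  filter_upwards [self_mem_nhdsWithin] with t (ht : 0 < t)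
  have hst : √t * √t = t := Real.mul_self_sqrt ht.le
  rw [upperProfile, eq_div_iff (Real.sqrt_pos.mpr ht).ne']
  linear_combination (-C * (3/2 - √(2 * t))) * hst

theorem tendsto_abs_div_self (hC : 0 ≤ C) :
    Tendsto (fun t => |upperProfile C t| / t) (𝓝[>] 0) (𝓝 (3 * C / 2)) := by
  have hlim : Tendsto (fun t : ℝ => C * |3/2 - √(2 * t)|) (𝓝[>] 0) (𝓝 (3 * C / 2)) := by
    have h : Continuous fun t : ℝ => C * |3/2 - √(2 * t)| := by fun_prop
    convert (h.tendsto 0).mono_left nhdsWithin_le_nhds using 2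
    norm_num [abs_of_pos]
    ring
  refine hlim.congr' ?_
  filter_upwards [self_mem_nhdsWithin] with t (ht : 0 < t)
  rw [upperProfile, abs_mul, abs_mul, abs_neg, abs_of_nonneg hC, abs_of_pos ht]
  field_simp

theorem tendsto_zero : Tendsto (upperProfile C) (𝓝[>] 0) (𝓝 0) := by
  have h : Continuous (upperProfile C) := by unfold upperProfile; fun_prop
  simpa [upperProfile] using (h.tendsto 0).mono_left nhdsWithin_le_nhds

end upperProfile

theorem sq_div_add_le_div {C lam s : ℝ} (hC0 : 0 ≤ C) (hC1 : C ≤ 128 / 9)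
    (hlam : lam ≤ 2 * C) (hs0 : 0 < s) (hs1 : s ≤ 3 / 2) :
    C ^ 2 * (3/2 - s) ^ 2 / 8 + lam / 2 ≤ 3 * C / 2 / s := by
  rw [le_div_iff₀ hs0]
  have h1 : 0 ≤ C * ((128/9 - C) * (s * (3/2 - s) ^ 2)) :=
    mul_nonneg hC0 (mul_nonneg (by linarith) (by positivity))
  have h2 : 0 ≤ C * ((4 * s - 3) ^ 2 * (3 - 2 * s)) :=
    mul_nonneg hC0 (mul_nonneg (sq_nonneg _) (by linarith))
  have h3 : lam * s ≤ 2 * C * s := mul_le_mul_of_nonneg_right hlam hs0.le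
  nlinarith

theorem stmt17_general (C lam : ℝ) (hC0 : 0 ≤ C) (hC1 : C ≤ 128 / 9)
    (hlam1 : lam ≤ 2 * C)
    (β : ℝ → ℝ) (hβdef : ∀ t : ℝ, β t = -C * t * (3/2 - Real.sqrt (2 * t))) :
    C2loc β ∧
    (∀ t ∈ Set.Ioc (0:ℝ) (1/2),
      deriv (deriv β) t ≥ β t ^ 2 / (8 * t ^ 2) + lam / 2) ∧
    deriv β (1/2) = 0 ∧
    (∀ t ∈ Set.Ioc (0:ℝ) (1/2), β t ≤ 0) ∧
    Tendsto (fun t => β t / Real.sqrt t) (𝓝[>] (0:ℝ)) (𝓝 0) ∧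
    (∃ L : ℝ, Tendsto (fun t => |β t| / t) (𝓝[>] (0:ℝ)) (𝓝 L)) ∧
    Tendsto β (𝓝[>] (0:ℝ)) (𝓝 0) := by
  obtain rfl : β = upperProfile C := funext hβdef
  refine ⟨fun a b ha _ x hx => (upperProfile.contDiffAt C (ha.trans_le hx.1)).contDiffWithinAt,
    fun t ht => ?_, ?_, fun t => upperProfile.nonpos C hC0, upperProfile.tendsto_div_sqrt C,
    ⟨_, upperProfile.tendsto_abs_div_self C hC0⟩, upperProfile.tendsto_zero C⟩
  · rw [upperProfile.deriv_deriv_eq C ht.1, upperProfile.sq_div_eq C ht.1]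
    exact sq_div_add_le_div hC0 hC1 hlam1 (Real.sqrt_pos.mpr (by linarith [ht.1]))
      ((Real.sqrt_le_one.mpr (by linarith [ht.2])).trans (by norm_num))
  · rw [upperProfile.deriv_eq C (by norm_num)]
    norm_num

theorem stmt17 (C lam : ℝ) (hC0 : 0 ≤ C) (hC1 : C ≤ 128 / 9)
    (hlam0 : 0 ≤ lam) (hlam1 : lam ≤ 2 * C)
    (β : ℝ → ℝ) (hβdef : ∀ t : ℝ, β t = -C * t * (3/2 - Real.sqrt (2 * t))) :
    C2loc β ∧
    (∀ t ∈ Set.Ioc (0:ℝ) (1/2),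
      deriv (deriv β) t ≥ β t ^ 2 / (8 * t ^ 2) + lam / 2) ∧
    deriv β (1/2) = 0 ∧
    (∀ t ∈ Set.Ioc (0:ℝ) (1/2), β t ≤ 0) ∧
    Tendsto (fun t => β t / Real.sqrt t) (𝓝[>] (0:ℝ)) (𝓝 0) ∧
    (∃ L : ℝ, Tendsto (fun t => |β t| / t) (𝓝[>] (0:ℝ)) (𝓝 L)) ∧
    Tendsto β (𝓝[>] (0:ℝ)) (𝓝 0) :=
  stmt17_general C lam hC0 hC1 hlam1 β hβdef
end

section
/- Let C be a real number with 0 ≤ C ≤ 48 and let λ satisfy 0 ≤ λ ≤ 3C. Define β(t) = −C·t·(1 − √(2t)) for t ∈ (0,1/2]. Then β ∈ C²_loc((0,1/2];ℝ), β satisfies β''(t) ≥ β(t)²/(8t²) + λ/2 for all t ∈ (0,1/2], β(1/2) = 0, β(t) ≤ 0 for all t ∈ (0,1/2], lim_{t→0⁺} β(t)/√t = 0, lim_{t→0⁺} |β(t)|/t < +∞, and lim_{t→0⁺} β(t) = 0. In particular, β is an upper solution of Problem 1. -/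
open Real Filter Set Topology intervalIntegral

theorem stmt18 (C lam : ℝ) (hC0 : 0 ≤ C) (hC1 : C ≤ 48)
    (hlam0 : 0 ≤ lam) (hlam1 : lam ≤ 3 * C)
    (β : ℝ → ℝ) (hβdef : ∀ t : ℝ, β t = -C * t * (1 - Real.sqrt (2 * t))) :
    C2loc β ∧
    (∀ t ∈ Set.Ioc (0:ℝ) (1/2),
      deriv (deriv β) t ≥ β t ^ 2 / (8 * t ^ 2) + lam / 2) ∧
    β (1/2) = 0 ∧
    (∀ t ∈ Set.Ioc (0:ℝ) (1/2), β t ≤ 0) ∧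
    Tendsto (fun t => β t / Real.sqrt t) (𝓝[>] (0:ℝ)) (𝓝 0) ∧
    (∃ L : ℝ, Tendsto (fun t => |β t| / t) (𝓝[>] (0:ℝ)) (𝓝 L)) ∧
    Tendsto β (𝓝[>] (0:ℝ)) (𝓝 0) := by
  have hβ : β = fun t => -C * t * (1 - Real.sqrt (2 * t)) := funext hβdef
  subst hβ
  -- first derivative
  have hd1 : ∀ t : ℝ, 0 < t → HasDerivAt (fun t : ℝ => -C * t * (1 - Real.sqrt (2 * t)))
      (-C + 3/2 * C * Real.sqrt (2*t)) t := by
    intro t ht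
    have h2t : (0:ℝ) < 2 * t := by linarith
    set s := Real.sqrt (2*t) with hsdef
    have hs0 : 0 < s := Real.sqrt_pos.2 h2t
    have hs2 : s * s = 2 * t := Real.mul_self_sqrt h2t.le
    have hsqrt : HasDerivAt (fun x : ℝ => Real.sqrt (2 * x)) (1 / (2 * s) * 2) t := by
      have := (Real.hasDerivAt_sqrt h2t.ne').comp t ((hasDerivAt_id t).const_mul 2)
      simpa only [Function.comp_def, mul_one, hsdef] using this
    have h1 : HasDerivAt (fun x : ℝ => -C * x) (-C) t := by
      simpa using (hasDerivAt_id t).const_mul (-C)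
    have h2 : HasDerivAt (fun x : ℝ => 1 - Real.sqrt (2*x)) (-(1/(2*s)*2)) t :=
      hsqrt.const_sub 1
    have := h1.mul h2
    convert this using 1
    have hne : s ≠ 0 := hs0.ne'
    have hss : Real.sqrt 2 * Real.sqrt t = s := by
      rw [hsdef, ← Real.sqrt_mul (by norm_num : (0:ℝ) ≤ 2)]
    clear_value s
    case e'_4 => rfl
    case e'_5 => rfl
    case e'_8 => rfl
    rw [← hsdef, show t = s*s/2 by linarith]
    field_simp
    ring
  constructor
  · -- C2loc
    intro a b ha hb x hx
    have hx0 : 0 < x := lt_of_lt_of_le ha hx.1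
    have h2x : (2:ℝ) * x ≠ 0 := by positivity
    exact (((contDiffAt_const (c := -C)).mul contDiffAt_id).mul
      (contDiffAt_const.sub ((Real.contDiffAt_sqrt h2x).comp x
        (contDiffAt_const.mul contDiffAt_id)))).contDiffWithinAt
  refine ⟨?_, ?_, ?_, ?_, ?_, ?_⟩
  · -- the differential inequality
    intro t ht
    obtain ⟨ht0, ht1⟩ := ht
    have h2t : (0:ℝ) < 2 * t := by linarith
    set s := Real.sqrt (2*t) with hsdef
    have hs0 : 0 < s := Real.sqrt_pos.2 h2t
    have hs2 : s * s = 2 * t := Real.mul_self_sqrt h2t.le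
    have hs1 : s ≤ 1 := by
      rw [hsdef, show (1:ℝ) = Real.sqrt 1 by simp]
      exact Real.sqrt_le_sqrt (by linarith)
    have hEq : deriv (fun t : ℝ => -C * t * (1 - Real.sqrt (2 * t))) =ᶠ[𝓝 t]
        (fun x : ℝ => -C + 3/2 * C * Real.sqrt (2*x)) := by
      filter_upwards [isOpen_Ioi.mem_nhds ht0] with x hx
      exact (hd1 x hx).deriv
    have hsqrt : HasDerivAt (fun x : ℝ => Real.sqrt (2 * x)) (1 / (2 * s) * 2) t := by
      have := (Real.hasDerivAt_sqrt h2t.ne').comp t ((hasDerivAt_id t).const_mul 2)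
      simpa only [Function.comp_def, mul_one, hsdef] using this
    have hd2 : HasDerivAt (fun x : ℝ => -C + 3/2 * C * Real.sqrt (2*x))
        (3/2 * C * (1 / (2 * s) * 2)) t := ((hsqrt.const_mul (3/2 * C)).const_add (-C))
    have hderiv2 : deriv (deriv (fun t : ℝ => -C * t * (1 - Real.sqrt (2 * t)))) t
        = 3/2 * C * (1 / (2 * s) * 2) := by
      rw [hEq.deriv_eq]; exact hd2.deriv
    rw [hderiv2]
    show _ ≥ (-C * t * (1 - s)) ^ 2 / (8 * t ^ 2) + lam / 2
    have hkey : (-C * t * (1 - s)) ^ 2 / (8 * t ^ 2) = C^2 * (1-s)^2 / 8 := by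
      field_simp
    rw [hkey, ge_iff_le]
    have hval : 3/2 * C * (1 / (2 * s) * 2) = (3/2 * C) / s := by
      field_simp
    rw [hval, le_div_iff₀ hs0]
    nlinarith [mul_nonneg (mul_nonneg hC0 hs0.le) (sq_nonneg (1-s)),
      mul_nonneg (mul_nonneg (sub_nonneg.2 hC1) hs0.le) (sq_nonneg (1-s)),
      mul_nonneg (sub_nonneg.2 hlam1) hs0.le,
      mul_nonneg (mul_nonneg hC0 (sub_nonneg.2 hs1)) (sq_nonneg (2*s-1))]
  · -- β (1/2) = 0
    norm_num
  · -- β ≤ 0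
    intro t ht
    have hs1 : Real.sqrt (2*t) ≤ 1 := by
      rw [show (1:ℝ) = Real.sqrt 1 by simp]
      exact Real.sqrt_le_sqrt (by linarith [ht.2])
    have : 0 ≤ C * t * (1 - Real.sqrt (2*t)) := by
      apply mul_nonneg (mul_nonneg hC0 ht.1.le); linarith
    simpa using this
  · -- β t / sqrt t → 0
    have hc : Tendsto (fun t : ℝ => -C * Real.sqrt t * (1 - Real.sqrt (2*t))) (𝓝[>] (0:ℝ)) (𝓝 0) := by
      have hcont : ContinuousAt (fun t : ℝ => -C * Real.sqrt t * (1 - Real.sqrt (2*t))) 0 := by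
        fun_prop
      have := hcont.tendsto.mono_left (nhdsWithin_le_nhds : 𝓝[>] (0:ℝ) ≤ 𝓝 0)
      simpa using this
    refine hc.congr' ?_
    filter_upwards [self_mem_nhdsWithin] with x (hx : 0 < x)
    have h1 : Real.sqrt x ≠ 0 := (Real.sqrt_pos.2 hx).ne'
    have h2 : Real.sqrt x * Real.sqrt x = x := Real.mul_self_sqrt hx.le
    rw [Real.sqrt_mul (by norm_num : (0:ℝ) ≤ 2) x]
    field_simp
    linear_combination (-C) * (1 - Real.sqrt 2 * Real.sqrt x) * h2
  · -- |β t| / t → C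
    refine ⟨C, ?_⟩
    have hc : Tendsto (fun t : ℝ => C * (1 - Real.sqrt (2*t))) (𝓝[>] (0:ℝ)) (𝓝 C) := by
      have hcont : ContinuousAt (fun t : ℝ => C * (1 - Real.sqrt (2*t))) 0 := by fun_prop
      have := hcont.tendsto.mono_left (nhdsWithin_le_nhds : 𝓝[>] (0:ℝ) ≤ 𝓝 0)
      simpa using this
    refine hc.congr' ?_
    filter_upwards [Ioo_mem_nhdsGT_of_mem (Set.left_mem_Ico.2 (by norm_num : (0:ℝ) < 1/2))]
      with x hx
    have hx0 : 0 < x := hx.1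
    have hs1 : Real.sqrt (2*x) ≤ 1 := by
      rw [show (1:ℝ) = Real.sqrt 1 by simp]
      exact Real.sqrt_le_sqrt (by linarith [hx.2])
    have hnp : -C * x * (1 - Real.sqrt (2*x)) ≤ 0 := by
      have : 0 ≤ C * x * (1 - Real.sqrt (2*x)) := by
        apply mul_nonneg (mul_nonneg hC0 hx0.le); linarith
      linarith
    show C * (1 - Real.sqrt (2*x)) = |(-C * x * (1 - Real.sqrt (2*x)))| / x
    rw [abs_of_nonpos hnp]
    field_simp
  · -- β → 0
    have hcont : ContinuousAt (fun t : ℝ => -C * t * (1 - Real.sqrt (2*t))) 0 := by fun_prop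
    have := hcont.tendsto.mono_left (nhdsWithin_le_nhds : 𝓝[>] (0:ℝ) ≤ 𝓝 0)
    simpa using this
end

section
/- Let C be a real number with 0 ≤ C ≤ 6 and let λ satisfy 0 ≤ λ ≤ 3C/2. Define β(t) = −C·t·(2 − √(2t)) for t ∈ (0,1/2]. Then β ∈ C²_loc((0,1/2];ℝ), β satisfies β''(t) ≥ β(t)²/(8t²) + λ/2 for all t ∈ (0,1/2], β(1/2) = β'(1/2), β(t) ≤ 0 for all t ∈ (0,1/2], lim_{t→0⁺} β(t)/√t = 0, lim_{t→0⁺} |β(t)|/t < +∞, and lim_{t→0⁺} β(t) = 0. In particular, β is an upper solution of Problem 3. -/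
open Real Filter Set Topology intervalIntegral

theorem stmt19 (C lam : ℝ) (hC0 : 0 ≤ C) (hC1 : C ≤ 6)
    (hlam0 : 0 ≤ lam) (hlam1 : lam ≤ 3 * C / 2)
    (β : ℝ → ℝ) (hβdef : ∀ t : ℝ, β t = -C * t * (2 - Real.sqrt (2 * t))) :
    C2loc β ∧
    (∀ t ∈ Set.Ioc (0:ℝ) (1/2),
      deriv (deriv β) t ≥ β t ^ 2 / (8 * t ^ 2) + lam / 2) ∧
    β (1/2) = deriv β (1/2) ∧
    (∀ t ∈ Set.Ioc (0:ℝ) (1/2), β t ≤ 0) ∧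
    Tendsto (fun t => β t / Real.sqrt t) (𝓝[>] (0:ℝ)) (𝓝 0) ∧
    (∃ L : ℝ, Tendsto (fun t => |β t| / t) (𝓝[>] (0:ℝ)) (𝓝 L)) ∧
    Tendsto β (𝓝[>] (0:ℝ)) (𝓝 0) := by
  have hβfun : β = fun t => -C * t * (2 - Real.sqrt (2 * t)) := funext hβdef
  -- first derivative
  have hd1 : ∀ t : ℝ, 0 < t → HasDerivAt β (-2*C + (3/2)*C*Real.sqrt 2*Real.sqrt t) t := by
    intro t ht
    have hst : Real.sqrt t ≠ 0 := (Real.sqrt_pos.mpr ht).ne'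
    have hs : HasDerivAt (fun s : ℝ => Real.sqrt s) (1/(2*Real.sqrt t)) t :=
      Real.hasDerivAt_sqrt ht.ne'
    have h1 : HasDerivAt (fun s : ℝ => -2*C*s + C*Real.sqrt 2*(s*Real.sqrt s))
        (-2*C*1 + C*Real.sqrt 2*(1*Real.sqrt t + t*(1/(2*Real.sqrt t)))) t := by
      exact ((hasDerivAt_id t).const_mul (-2*C)).add
        (((hasDerivAt_id t).mul hs).const_mul (C*Real.sqrt 2))
    have heq : β = fun s : ℝ => -2*C*s + C*Real.sqrt 2*(s*Real.sqrt s) := by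
      funext s
      rw [hβdef, Real.sqrt_mul (by norm_num : (0:ℝ) ≤ 2)]
      ring
    rw [heq]
    have ht2 : (Real.sqrt t)^2 = t := Real.sq_sqrt ht.le
    convert h1 using 1
    field_simp
    linear_combination (C*Real.sqrt 2) * ht2
  have hderiv1 : ∀ t : ℝ, 0 < t → deriv β t = -2*C + (3/2)*C*Real.sqrt 2*Real.sqrt t :=
    fun t ht => (hd1 t ht).deriv
  -- second derivative
  have hd2 : ∀ t : ℝ, 0 < t →
      HasDerivAt (deriv β) ((3/2)*C*Real.sqrt 2*(1/(2*Real.sqrt t))) t := by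
    intro t ht
    have hs : HasDerivAt (fun s : ℝ => Real.sqrt s) (1/(2*Real.sqrt t)) t :=
      Real.hasDerivAt_sqrt ht.ne'
    have h1 : HasDerivAt (fun s : ℝ => -2*C + (3/2)*C*Real.sqrt 2*Real.sqrt s)
        ((3/2)*C*Real.sqrt 2*(1/(2*Real.sqrt t))) t := by
      have h := (hasDerivAt_const t (-2*C)).add (hs.const_mul ((3/2)*C*Real.sqrt 2))
      rw [zero_add] at h
      exact h
    apply h1.congr_of_eventuallyEq
    filter_upwards [eventually_nhds_iff.mpr ⟨Set.Ioi 0, fun s hs => hs, isOpen_Ioi, ht⟩] with s hs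
    exact hderiv1 s hs
  have hsqrt2 : (Real.sqrt 2)^2 = 2 := Real.sq_sqrt (by norm_num)
  have hsqrt2pos : 0 < Real.sqrt 2 := Real.sqrt_pos.mpr (by norm_num)
  refine ⟨?_, ?_, ?_, ?_, ?_, ?_, ?_⟩
  · -- C2loc
    intro a b ha hb x hx
    have hx0 : 0 < x := lt_of_lt_of_le ha hx.1
    have h1 : ContDiffAt ℝ 2 (fun t : ℝ => Real.sqrt (2*t)) x :=
      (Real.contDiffAt_sqrt (by positivity : (0:ℝ) < 2*x).ne').comp x
        (contDiffAt_const.mul contDiffAt_id)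
    have h2 : ContDiffAt ℝ 2 β x := by
      rw [hβfun]
      exact (contDiffAt_const.mul contDiffAt_id).mul (contDiffAt_const.sub h1)
    exact h2.contDiffWithinAt
  · -- differential inequality
    intro t ht
    obtain ⟨ht0, ht1⟩ := ht
    rw [(hd2 t ht0).deriv, hβdef]
    have hu : (Real.sqrt t)^2 = t := Real.sq_sqrt ht0.le
    have hu0 : 0 < Real.sqrt t := Real.sqrt_pos.mpr ht0
    have hsm : Real.sqrt (2*t) = Real.sqrt 2 * Real.sqrt t :=
      Real.sqrt_mul (by norm_num) t
    have hs1 : Real.sqrt (2*t) ≤ 1 := Real.sqrt_le_one.mpr (by linarith)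
    rw [hsm] at hs1 ⊢
    rw [ge_iff_le, ← sub_nonneg]
    have key : (3/2)*C*Real.sqrt 2*(1/(2*Real.sqrt t)) -
        ((-C * t * (2 - Real.sqrt 2 * Real.sqrt t)) ^ 2 / (8 * t ^ 2) + lam / 2)
        = (12*C - C^2*Real.sqrt 2*Real.sqrt t*(2 - Real.sqrt 2*Real.sqrt t)^2
            - 4*lam*Real.sqrt 2*Real.sqrt t) / (8 * Real.sqrt 2 * Real.sqrt t) := by
      rw [← hu]
      field_simp
      linear_combination (24*C) * hsqrt2
    rw [key]
    apply div_nonneg _ (by positivity)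
    set s := Real.sqrt 2 * Real.sqrt t with hsdef
    have hs0 : 0 < s := mul_pos hsqrt2pos hu0
    have e1 : lam * s ≤ (3*C/2) * s :=
      mul_le_mul_of_nonneg_right (by linarith) hs0.le
    have w : 0 ≤ C * (s * (2-s)^2) :=
      mul_nonneg hC0 (mul_nonneg hs0.le (sq_nonneg _))
    have e2 : C * (C * (s * (2-s)^2)) ≤ 6 * (C * (s * (2-s)^2)) :=
      mul_le_mul_of_nonneg_right hC1 w
    have e3 : 0 ≤ 6 * C * ((1-s)^2 * (2-s)) :=
      mul_nonneg (by linarith) (mul_nonneg (sq_nonneg _) (by linarith))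
    nlinarith [e1, e2, e3]
  · -- boundary condition
    rw [hderiv1 (1/2) (by norm_num), hβdef]
    have : Real.sqrt (2 * (1/2)) = 1 := by norm_num
    have h2 : Real.sqrt 2 * Real.sqrt (1/2) = 1 := by
      rw [← Real.sqrt_mul (by norm_num)]; norm_num
    rw [this]
    nlinarith [h2]
  · -- nonpositivity
    intro t ht
    rw [hβdef]
    have hs1 : Real.sqrt (2*t) ≤ 1 := Real.sqrt_le_one.mpr (by linarith [ht.2])
    have := ht.1
    have h2s : (0:ℝ) ≤ 2 - Real.sqrt (2*t) := by linarith
    have := mul_nonneg (mul_nonneg hC0 this.le) h2s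
    nlinarith
  · -- limit β/√t
    have heq : ∀ᶠ t in 𝓝[>] (0:ℝ), β t / Real.sqrt t
        = -C * Real.sqrt t * (2 - Real.sqrt (2*t)) := by
      filter_upwards [self_mem_nhdsWithin] with t ht
      have ht0 : (0:ℝ) < t := ht
      have hu : (Real.sqrt t)^2 = t := Real.sq_sqrt ht0.le
      have hu0 : Real.sqrt t ≠ 0 := (Real.sqrt_pos.mpr ht0).ne'
      rw [hβdef,
        show -C*t*(2-Real.sqrt (2*t))/Real.sqrt t
          = -C*(2-Real.sqrt (2*t))*(t/Real.sqrt t) by ring,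
        Real.div_sqrt]
      ring
    rw [tendsto_congr' heq]
    have : ContinuousAt (fun t : ℝ => -C * Real.sqrt t * (2 - Real.sqrt (2*t))) 0 := by
      fun_prop
    have h := this.tendsto
    rw [show -C * Real.sqrt 0 * (2 - Real.sqrt (2*0)) = 0 by simp] at h
    exact h.mono_left nhdsWithin_le_nhds
  · -- limit |β|/t
    refine ⟨2*C, ?_⟩
    have heq : ∀ᶠ t in 𝓝[>] (0:ℝ), |β t| / t = C * (2 - Real.sqrt (2*t)) := by
      filter_upwards [Ioo_mem_nhdsGT_of_mem (by norm_num : (0:ℝ) ∈ Set.Ico 0 (1/2:ℝ))] with t ht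
      have ht0 : (0:ℝ) < t := ht.1
      have hs1 : Real.sqrt (2*t) ≤ 1 := Real.sqrt_le_one.mpr (by linarith [ht.2])
      have hC2 : (0:ℝ) ≤ C * t * (2 - Real.sqrt (2*t)) :=
        mul_nonneg (mul_nonneg hC0 ht0.le) (by linarith)
      rw [hβdef, abs_of_nonpos (by linarith)]
      field_simp
    rw [tendsto_congr' heq]
    have : ContinuousAt (fun t : ℝ => C * (2 - Real.sqrt (2*t))) 0 := by fun_prop
    have h := this.tendsto
    rw [show C * (2 - Real.sqrt (2*0)) = 2*C by simp; ring] at h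
    exact h.mono_left nhdsWithin_le_nhds
  · -- limit β
    have : ContinuousAt β 0 := by rw [hβfun]; fun_prop
    have h := this.tendsto
    rw [show β 0 = 0 by rw [hβdef]; ring] at h
    exact h.mono_left nhdsWithin_le_nhds
end
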